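/- arXiv:1909.07235 — 5 statements merged into one kernel-verified Lean document; each statement's English description precedes it below -/
import Mathlib

section
/- For all integers ℓ, p ≥ 2, the balanced spider T_{p,ℓ} satisfies (1/2)·f(p,ℓ) ≤ th_-(T_{p,ℓ}) ≤ 3·f(p,ℓ), where f(p,ℓ) = min(ℓ, √(pℓ)) if ℓ is even and f(p,ℓ) = max(p, √(pℓ)) if ℓ is odd. -/
open SimpleGraph

/-- One round of skew zero forcing: every vertex (blue or white) with exactly one
white neighbor colors that neighbor blue. -/
def skewStep {V : Type*} (G : SimpleGraph V) (B : Set V) : Set V :=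
  B ∪ {w | ∃ v, G.Adj v w ∧ ∀ u, G.Adj v u → u ∉ B → u = w}

/-- The set of blue vertices after `n` rounds of skew zero forcing starting from `S`. -/
def skewIter {V : Type*} (G : SimpleGraph V) (S : Set V) : ℕ → Set V
  | 0 => S
  | n + 1 => skewStep G (skewIter G S n)

/-- `S` is a skew zero forcing set of `G`. -/
def IsSkewZFS {V : Type*} (G : SimpleGraph V) (S : Set V) : Prop :=
  ∃ n, skewIter G S n = Set.univ

/-- The skew propagation time `pt₋(G;S)`: the number of rounds needed for all
vertices to become blue. -/
noncomputable def skewPt {V : Type*} (G : SimpleGraph V) (S : Set V) : ℕ :=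
  sInf {n | skewIter G S n = Set.univ}

/-- The skew throttling number `th₋(G)`. -/
noncomputable def skewTh {V : Type*} (G : SimpleGraph V) : ℕ :=
  sInf {m | ∃ S : Set V, IsSkewZFS G S ∧ m = S.ncard + skewPt G S}

/-- The skew throttling number over sets of size `k`, `th₋(G,k)`. -/
noncomputable def skewThK {V : Type*} (G : SimpleGraph V) (k : ℕ) : ℕ :=
  sInf {m | ∃ S : Set V, IsSkewZFS G S ∧ S.ncard = k ∧ m = S.ncard + skewPt G S}

/-- The skew zero forcing number `Z₋(G)`. -/
noncomputable def skewZ {V : Type*} (G : SimpleGraph V) : ℕ :=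
  sInf {m | ∃ S : Set V, IsSkewZFS G S ∧ m = S.ncard}

/-- The skew propagation time `pt₋(G)`: minimum propagation time over minimum
skew zero forcing sets. -/
noncomputable def skewPtMin {V : Type*} (G : SimpleGraph V) : ℕ :=
  sInf {m | ∃ S : Set V, IsSkewZFS G S ∧ S.ncard = skewZ G ∧ m = skewPt G S}

/-- `rK₂`: the disjoint union of `r` copies of `K₂`. -/
def rK2 (r : ℕ) : SimpleGraph (Fin r × Fin 2) :=
  SimpleGraph.fromRel (fun a b => a.1 = b.1)

/-- Disjoint union of two simple graphs. -/
def disjUnion {α β : Type*} (G : SimpleGraph α) (H : SimpleGraph β) :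
    SimpleGraph (α ⊕ β) :=
  SimpleGraph.fromRel (fun x y =>
    match x, y with
    | Sum.inl a, Sum.inl b => G.Adj a b
    | Sum.inr a, Sum.inr b => H.Adj a b
    | _, _ => False)

/-- The corona `G ∘ K₁`: attach a pendant leaf to every vertex of `G`. -/
def coronaK1 {α : Type*} (G : SimpleGraph α) : SimpleGraph (α ⊕ α) :=
  SimpleGraph.fromRel (fun x y =>
    match x, y with
    | Sum.inl a, Sum.inl b => G.Adj a b
    | Sum.inl a, Sum.inr b => a = b
    | _, _ => False)

/-- The corona `G ∘ K₂`: attach a private copy of `K₂` (a triangle) to every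
vertex of `G`. -/
def coronaK2 {α : Type*} (G : SimpleGraph α) : SimpleGraph (α ⊕ α × Fin 2) :=
  SimpleGraph.fromRel (fun x y =>
    match x, y with
    | Sum.inl a, Sum.inl b => G.Adj a b
    | Sum.inl a, Sum.inr b => a = b.1
    | Sum.inr a, Sum.inr b => a.1 = b.1
    | _, _ => False)

/-- The graph `H(s,t)` with hub `b`, pendant paths `b xᵢ yᵢ` and triangles `b zᵢ wᵢ`. -/
def Hgraph (s t : ℕ) : SimpleGraph (Unit ⊕ ((Fin s × Fin 2) ⊕ (Fin t × Fin 2))) :=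
  SimpleGraph.fromRel (fun x y =>
    match x, y with
    | Sum.inl _, Sum.inr (Sum.inl p) => p.2 = 0
    | Sum.inl _, Sum.inr (Sum.inr _) => True
    | Sum.inr (Sum.inl p), Sum.inr (Sum.inl q) => p.1 = q.1
    | Sum.inr (Sum.inr p), Sum.inr (Sum.inr q) => p.1 = q.1
    | _, _ => False)

/-- The friendship graph `Fₙ`: a universal vertex joined to `n` disjoint copies of `K₂`. -/
def friendshipGraph (n : ℕ) : SimpleGraph (Unit ⊕ (Fin n × Fin 2)) :=
  SimpleGraph.fromRel (fun x y =>
    match x, y with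
    | Sum.inl _, Sum.inr _ => True
    | Sum.inr p, Sum.inr q => p.1 = q.1
    | _, _ => False)

/-- The balanced spider `T_{p,ℓ}`: a center with `p` legs of `ℓ` vertices each. -/
def spider (p ℓ : ℕ) : SimpleGraph (Unit ⊕ (Fin p × Fin ℓ)) :=
  SimpleGraph.fromRel (fun x y =>
    match x, y with
    | Sum.inl _, Sum.inr q => q.2.val = 0
    | Sum.inr q, Sum.inr q' => q.1 = q'.1 ∧ q'.2.val = q.2.val + 1
    | _, _ => False)

/-- The hypercube graph `Qₙ`: binary strings of length `n`, adjacent iff they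
differ in exactly one coordinate. -/
def hypercube (n : ℕ) : SimpleGraph (Fin n → Bool) :=
  SimpleGraph.fromRel (fun x y => ∃! i, x i ≠ y i)

namespace SpiderAux

open SimpleGraph Set

section Basic

variable {V : Type*} (G : SimpleGraph V) (S : Set V)

lemma subset_skewStep (B : Set V) : B ⊆ skewStep G B := Set.subset_union_left

lemma skewIter_succ (n : ℕ) : skewIter G S (n+1) = skewStep G (skewIter G S n) := rfl

lemma skewIter_zero : skewIter G S 0 = S := rfl

lemma skewIter_mono {m n : ℕ} (h : m ≤ n) : skewIter G S m ⊆ skewIter G S n := by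
  induction n with
  | zero => simp_all
  | succ n ih =>
    rcases Nat.lt_or_ge m (n+1) with h' | h'
    · exact (ih (Nat.lt_succ_iff.mp h')).trans (subset_skewStep G _)
    · have : m = n + 1 := le_antisymm h h'
      subst this; exact subset_rfl

lemma isSkewZFS_univ : IsSkewZFS G (Set.univ : Set V) := ⟨0, rfl⟩

lemma skewIter_skewPt (h : IsSkewZFS G S) : skewIter G S (skewPt G S) = Set.univ :=
  Nat.sInf_mem h

lemma skewPt_le {t : ℕ} (h : skewIter G S t = Set.univ) : skewPt G S ≤ t :=
  Nat.sInf_le h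

lemma skewTh_le {t : ℕ} (h : skewIter G S t = Set.univ) :
    skewTh G ≤ S.ncard + t := by
  have h1 : skewTh G ≤ S.ncard + skewPt G S := Nat.sInf_le ⟨S, ⟨t, h⟩, rfl⟩
  exact h1.trans (Nat.add_le_add_left (skewPt_le G S h) _)

lemma skewTh_spec : ∃ S : Set V, IsSkewZFS G S ∧ skewTh G = S.ncard + skewPt G S := by
  have : skewTh G ∈ {m | ∃ S : Set V, IsSkewZFS G S ∧ m = S.ncard + skewPt G S} :=
    Nat.sInf_mem ⟨_, (Set.univ : Set V), isSkewZFS_univ G, rfl⟩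
  obtain ⟨S, h1, h2⟩ := this
  exact ⟨S, h1, h2⟩

/-- The scheduling lemma: a "forcing schedule" certifies full forcing by time `t`. -/
lemma sched (τ : V → ℕ) (t : ℕ)
    (h0 : ∀ v, τ v = 0 → v ∈ S)
    (hstep : ∀ v, τ v ≠ 0 → ∃ u, G.Adj u v ∧ ∀ w, G.Adj u w → w ≠ v → τ w < τ v)
    (hmax : ∀ v, τ v ≤ t) :
    skewIter G S t = Set.univ := by
  have key : ∀ r v, τ v ≤ r → v ∈ skewIter G S r := by
    intro r
    induction r with
    | zero => intro v hv; exact h0 v (Nat.le_zero.mp hv)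
    | succ r ih =>
      intro v hv
      rcases Nat.lt_or_ge (τ v) (r+1) with h' | h'
      · exact subset_skewStep G _ (ih v (Nat.lt_succ_iff.mp h'))
      · have hτ : τ v = r + 1 := le_antisymm hv h'
        have hτ0 : τ v ≠ 0 := by omega
        obtain ⟨u, hadj, hu⟩ := hstep v hτ0
        refine Set.mem_union_right _ ⟨u, hadj, ?_⟩
        intro w hw hwB
        by_contra hne
        exact hwB (ih w (by have := hu w hw hne; omega))
  ext v
  simp only [Set.mem_univ, iff_true]
  exact key t v (hmax v)

end Basic

section SpiderAdj

variable {p ℓ : ℕ}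

/-- The center of the spider. -/
abbrev ctr (p ℓ : ℕ) : Unit ⊕ (Fin p × Fin ℓ) := Sum.inl ()

/-- Leg vertex. -/
abbrev lv (j : Fin p) (a : Fin ℓ) : Unit ⊕ (Fin p × Fin ℓ) := Sum.inr (j, a)

lemma spider_adj_ctr_lv {j : Fin p} {a : Fin ℓ} :
    (spider p ℓ).Adj (ctr p ℓ) (lv j a) ↔ a.val = 0 := by
  simp [spider, SimpleGraph.fromRel_adj, ctr, lv]

lemma spider_adj_lv_lv {j j' : Fin p} {a a' : Fin ℓ} :
    (spider p ℓ).Adj (lv j a) (lv j' a') ↔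
      j = j' ∧ (a'.val = a.val + 1 ∨ a.val = a'.val + 1) := by
  simp only [spider, SimpleGraph.fromRel_adj, lv, ne_eq, Sum.inr.injEq, Prod.mk.injEq]
  constructor
  · rintro ⟨hne, (⟨h1, h2⟩ | ⟨h1, h2⟩)⟩
    · exact ⟨h1, Or.inl h2⟩
    · exact ⟨h1.symm, Or.inr h2⟩
  · rintro ⟨rfl, (h | h)⟩
    · exact ⟨by rintro ⟨-, rfl⟩; omega, Or.inl ⟨rfl, h⟩⟩
    · exact ⟨by rintro ⟨-, rfl⟩; omega, Or.inr ⟨rfl, h⟩⟩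

lemma spider_not_adj_ctr : ¬ (spider p ℓ).Adj (ctr p ℓ) (ctr p ℓ) := by
  simp

lemma spider_adj_lv_ctr {j : Fin p} {a : Fin ℓ} :
    (spider p ℓ).Adj (lv j a) (ctr p ℓ) ↔ a.val = 0 := by
  rw [SimpleGraph.adj_comm]; exact spider_adj_ctr_lv

/-- Enumeration of neighbors of the center. -/
lemma spider_adj_ctr_iff {x : Unit ⊕ (Fin p × Fin ℓ)} :
    (spider p ℓ).Adj (ctr p ℓ) x ↔ ∃ j : Fin p, ∃ a : Fin ℓ, a.val = 0 ∧ x = lv j a := by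
  cases x with
  | inl u => simp [ctr]
  | inr q =>
    obtain ⟨j, a⟩ := q
    rw [spider_adj_ctr_lv]
    constructor
    · intro h; exact ⟨j, a, h, rfl⟩
    · rintro ⟨j', a', h, he⟩
      simp only [lv, Sum.inr.injEq, Prod.mk.injEq] at he
      obtain ⟨rfl, rfl⟩ := he; exact h

/-- Enumeration of neighbors of a leg vertex. -/
lemma spider_adj_lv_iff {j : Fin p} {a : Fin ℓ} {x : Unit ⊕ (Fin p × Fin ℓ)} :
    (spider p ℓ).Adj (lv j a) x ↔
      (a.val = 0 ∧ x = ctr p ℓ) ∨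
      (∃ a' : Fin ℓ, (a'.val = a.val + 1 ∨ a.val = a'.val + 1) ∧ x = lv j a') := by
  cases x with
  | inl u =>
    rw [show Sum.inl u = ctr p ℓ by rfl, spider_adj_lv_ctr]
    constructor
    · intro h; exact Or.inl ⟨h, rfl⟩
    · rintro (⟨h, -⟩ | ⟨a', -, h⟩)
      · exact h
      · exact absurd h (by simp [lv])
  | inr q =>
    obtain ⟨j', a'⟩ := q
    rw [show Sum.inr (j', a') = lv j' a' by rfl, spider_adj_lv_lv]
    constructor
    · rintro ⟨rfl, h⟩; exact Or.inr ⟨a', h, rfl⟩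
    · rintro (⟨-, h⟩ | ⟨a'', h, he⟩)
      · exact absurd h (by simp [lv, ctr])
      · simp only [lv, Sum.inr.injEq, Prod.mk.injEq] at he
        obtain ⟨rfl, rfl⟩ := he
        exact ⟨rfl, h⟩

end SpiderAdj

end SpiderAux

namespace SpiderAux

open SimpleGraph Set

section Lower

variable {p ℓ : ℕ} {S : Set (Unit ⊕ (Fin p × Fin ℓ))}

local notation "B" => skewIter (spider p ℓ) S

/-- Master case analysis for how a leg vertex can be forced. -/
lemma lv_force_cases {r : ℕ} {j : Fin p} {a : Fin ℓ}
    (h : lv j a ∈ B (r+1)) :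
    lv j a ∈ B r
    ∨ (a.val = 0 ∧ ∀ j' : Fin p, j' ≠ j → ∀ a0 : Fin ℓ, a0.val = 0 → lv j' a0 ∈ B r)
    ∨ (a.val + 1 < ℓ ∧ ∀ c : Fin ℓ, c.val = a.val + 2 → lv j c ∈ B r)
    ∨ (1 ≤ a.val ∧ (∀ c : Fin ℓ, c.val + 2 = a.val → lv j c ∈ B r) ∧
        (a.val = 1 → ctr p ℓ ∈ B r)) := by
  rcases h with h | ⟨v, hadj, hcond⟩
  · exact Or.inl h
  · have hadj' := hadj.symm
    rcases spider_adj_lv_iff.mp hadj' with ⟨ha0, rfl⟩ | ⟨b, hb, rfl⟩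
    · refine Or.inr (Or.inl ⟨ha0, ?_⟩)
      intro j' hne a0 ha0'
      by_contra hnB
      have := hcond _ (spider_adj_ctr_lv.mpr ha0') hnB
      simp only [lv, Sum.inr.injEq, Prod.mk.injEq] at this
      exact hne this.1
    · rcases hb with hb | hb
      · -- forcer from above : b = a + 1
        refine Or.inr (Or.inr (Or.inl ⟨by omega, ?_⟩))
        intro c hc
        by_contra hnB
        have hadjc : (spider p ℓ).Adj (lv j b) (lv j c) :=
          spider_adj_lv_lv.mpr ⟨rfl, Or.inl (by omega)⟩
        have := hcond _ hadjc hnB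
        simp only [lv, Sum.inr.injEq, Prod.mk.injEq] at this
        omega
      · -- forcer from below : a = b + 1
        refine Or.inr (Or.inr (Or.inr ⟨by omega, ?_, ?_⟩))
        · intro c hc
          by_contra hnB
          have hadjc : (spider p ℓ).Adj (lv j b) (lv j c) :=
            spider_adj_lv_lv.mpr ⟨rfl, Or.inr (by omega)⟩
          have := hcond _ hadjc hnB
          simp only [lv, Sum.inr.injEq, Prod.mk.injEq] at this
          omega
        · intro ha1
          by_contra hnB
          have hadjc : (spider p ℓ).Adj (lv j b) (ctr p ℓ) :=
            spider_adj_lv_ctr.mpr (by omega)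
          have := hcond _ hadjc hnB
          simp [lv, ctr] at this

/-- A leg with no vertex of `S` on it. -/
def Untouched (S : Set (Unit ⊕ (Fin p × Fin ℓ))) (j : Fin p) : Prop :=
  ∀ a : Fin ℓ, lv j a ∉ S

/-- Two-sided invariant for an untouched leg (any parity). -/
lemma invE1 {j : Fin p} (hu : Untouched S j) (hℓ : 2 ≤ ℓ) :
    ∀ r : ℕ, ∀ a : Fin ℓ, a.val % 2 = 0 → lv j a ∈ B r →
      min (ℓ - a.val) (a.val + 2) ≤ 2 * r := by
  intro r
  induction r with
  | zero => intro a _ h; exact absurd h (hu a)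
  | succ r ih =>
    intro a hpar h
    rcases lv_force_cases h with h | ⟨ha0, _⟩ | ⟨hlt, hc⟩ | ⟨ha1, hc, _⟩
    · have := ih a hpar h; omega
    · omega
    · rcases Nat.lt_or_ge (a.val + 2) ℓ with h2 | h2
      · have := ih ⟨a.val + 2, h2⟩ (by simp; omega) (hc _ rfl)
        simp at this; omega
      · omega
    · have h2 : 2 ≤ a.val := by omega
      have := ih ⟨a.val - 2, by omega⟩ (by simp; omega) (hc _ (by simp; omega))
      simp at this; omega

/-- One-sided invariant for untouched legs when `ℓ` is odd :
even-index vertices can only be colored slowly from the center. -/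
lemma invO1 {j : Fin p} (hu : Untouched S j) (hodd : ℓ % 2 = 1) :
    ∀ r : ℕ, ∀ a : Fin ℓ, a.val % 2 = 0 → lv j a ∈ B r → a.val + 2 ≤ 2 * r := by
  intro r
  induction r with
  | zero => intro a _ h; exact absurd h (hu a)
  | succ r ih =>
    intro a hpar h
    rcases lv_force_cases h with h | ⟨ha0, _⟩ | ⟨hlt, hc⟩ | ⟨ha1, hc, _⟩
    · have := ih a hpar h; omega
    · omega
    · have h2 : a.val + 2 < ℓ := by
        have := a.isLt; omega
      have := ih ⟨a.val + 2, h2⟩ (by simp; omega) (hc _ rfl)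
      simp at this; omega
    · have h2 : 2 ≤ a.val := by omega
      have := ih ⟨a.val - 2, by omega⟩ (by simp; omega) (hc _ (by simp; omega))
      simp at this; omega

/-- Joint invariant for a pair of untouched legs (any parity): the even-class
of each leg fills slowly from the leaf side. -/
lemma invE2 {j1 j2 : Fin p} (hne : j1 ≠ j2)
    (hu1 : Untouched S j1) (hu2 : Untouched S j2) :
    ∀ r : ℕ, ∀ j, (j = j1 ∨ j = j2) → ∀ a : Fin ℓ, a.val % 2 = 0 →
      lv j a ∈ B r → ℓ ≤ 2 * r + a.val := by
  intro r
  induction r with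
  | zero =>
    intro j hj a _ h
    rcases hj with rfl | rfl
    · exact absurd h (hu1 a)
    · exact absurd h (hu2 a)
  | succ r ih =>
    intro j hj a hpar h
    rcases lv_force_cases h with h | ⟨ha0, hcen⟩ | ⟨hlt, hc⟩ | ⟨ha1, hc, _⟩
    · have := ih j hj a hpar h; omega
    · -- forced by the center: the partner leg's 0-vertex is already blue
      obtain ⟨j', hj', hjne⟩ : ∃ j', (j' = j1 ∨ j' = j2) ∧ j' ≠ j := by
        rcases hj with rfl | rfl
        · exact ⟨j2, Or.inr rfl, fun hh => hne hh.symm⟩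
        · exact ⟨j1, Or.inl rfl, hne⟩
      have h0 : (0 : ℕ) < ℓ := by
        have := a.isLt; omega
      have := ih j' hj' ⟨0, h0⟩ (by simp) (hcen j' hjne ⟨0, h0⟩ rfl)
      simp at this; omega
    · rcases Nat.lt_or_ge (a.val + 2) ℓ with h2 | h2
      · have := ih j hj ⟨a.val + 2, h2⟩ (by simp; omega) (hc _ rfl)
        simp at this; omega
      · omega
    · have h2 : 2 ≤ a.val := by omega
      have := ih j hj ⟨a.val - 2, by omega⟩ (by simp; omega) (hc _ (by simp; omega))
      simp at this; omega

/-- For odd `ℓ`, coloring anything in the even class of an untouched leg requires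
a prior center-force event into that leg. -/
lemma invO2 {j : Fin p} (hu : Untouched S j) (hodd : ℓ % 2 = 1) :
    ∀ r : ℕ, ∀ a : Fin ℓ, a.val % 2 = 0 → lv j a ∈ B r →
      ∃ r', 1 ≤ r' ∧ r' ≤ r ∧
        ∀ j' : Fin p, j' ≠ j → ∀ a0 : Fin ℓ, a0.val = 0 → lv j' a0 ∈ B (r' - 1) := by
  intro r
  induction r with
  | zero => intro a _ h; exact absurd h (hu a)
  | succ r ih =>
    intro a hpar h
    rcases lv_force_cases h with h | ⟨ha0, hcen⟩ | ⟨hlt, hc⟩ | ⟨ha1, hc, _⟩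
    · obtain ⟨r', h1, h2, h3⟩ := ih a hpar h
      exact ⟨r', h1, by omega, h3⟩
    · exact ⟨r + 1, by omega, le_refl _, by simpa using hcen⟩
    · have h2 : a.val + 2 < ℓ := by have := a.isLt; omega
      obtain ⟨r', h1, hle, h3⟩ := ih ⟨a.val + 2, h2⟩ (by simp; omega) (hc _ rfl)
      exact ⟨r', h1, by omega, h3⟩
    · have h2 : 2 ≤ a.val := by omega
      obtain ⟨r', h1, hle, h3⟩ := ih ⟨a.val - 2, by omega⟩ (by simp; omega)
        (hc _ (by simp; omega))
      exact ⟨r', h1, by omega, h3⟩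

/-- Odd `ℓ` : there cannot be two untouched legs. -/
lemma two_untouched_odd {j1 j2 : Fin p} (hne : j1 ≠ j2)
    (hu1 : Untouched S j1) (hu2 : Untouched S j2) (hodd : ℓ % 2 = 1)
    (hzfs : IsSkewZFS (spider p ℓ) S) (hℓ : 2 ≤ ℓ) : False := by
  have h0 : (0 : ℕ) < ℓ := by omega
  obtain ⟨t, ht⟩ := hzfs
  set R : Set ℕ := {r | lv j1 ⟨0, h0⟩ ∈ B r ∨ lv j2 ⟨0, h0⟩ ∈ B r} with hR
  have hRne : R.Nonempty := ⟨t, Or.inl (by rw [ht]; trivial)⟩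
  have hmem : sInf R ∈ R := Nat.sInf_mem hRne
  have descend : ∀ jj kk : Fin p, jj ≠ kk → Untouched S jj →
      lv jj ⟨0, h0⟩ ∈ B (sInf R) → ∃ r'' < sInf R, lv kk ⟨0, h0⟩ ∈ B r'' := by
    intro jj kk hjk hujj hmemjj
    obtain ⟨r', h1, h2, h3⟩ := invO2 hujj hodd (sInf R) ⟨0, h0⟩ (by simp) hmemjj
    exact ⟨r' - 1, by omega, h3 kk (fun hh => hjk hh.symm) _ rfl⟩
  rcases hmem with hm | hm
  · obtain ⟨r'', hlt, hmem2⟩ := descend j1 j2 hne hu1 hm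
    have : sInf R ≤ r'' := Nat.sInf_le (Or.inr hmem2)
    omega
  · obtain ⟨r'', hlt, hmem2⟩ := descend j2 j1 (fun hh => hne hh.symm) hu2 hm
    have : sInf R ≤ r'' := Nat.sInf_le (Or.inl hmem2)
    omega

end Lower

end SpiderAux

namespace SpiderAux

open SimpleGraph Set

section Cover

variable {p ℓ : ℕ} {S : Set (Unit ⊕ (Fin p × Fin ℓ))}

local notation "B" => skewIter (spider p ℓ) S

/-- Coverage predicate : vertex `(j,a)` is within distance `t` of a source
(center-side entrance, leaf, or a seed of its own leg). -/
def Cov (S : Set (Unit ⊕ (Fin p × Fin ℓ))) (t : ℕ) (j : Fin p) (a : ℕ) : Prop :=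
  a + 1 ≤ t ∨ ℓ - 1 - a ≤ t ∨
    ∃ b : Fin ℓ, lv j b ∈ S ∧ b.val ≤ t + a ∧ a ≤ t + b.val

lemma cov_mono {t t' : ℕ} (h : t ≤ t') {j : Fin p} {a : ℕ} (hc : Cov S t j a) :
    Cov S t' j a := by
  rcases hc with h1 | h1 | ⟨b, hb, h1, h2⟩
  · exact Or.inl (by omega)
  · exact Or.inr (Or.inl (by omega))
  · exact Or.inr (Or.inr ⟨b, hb, by omega, by omega⟩)

lemma cov_invariant : ∀ r : ℕ, ∀ j : Fin p, ∀ a : Fin ℓ,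
    lv j a ∈ B r → Cov S (2 * r) j a.val := by
  intro r
  induction r with
  | zero =>
    intro j a h
    exact Or.inr (Or.inr ⟨a, h, by omega, by omega⟩)
  | succ r ih =>
    intro j a h
    rcases lv_force_cases h with h | ⟨ha0, _⟩ | ⟨hlt, hc⟩ | ⟨ha1, hc, _⟩
    · exact cov_mono (by omega) (ih j a h)
    · exact Or.inl (by omega)
    · rcases Nat.lt_or_ge (a.val + 2) ℓ with h2 | h2
      · have := ih j ⟨a.val + 2, h2⟩ (hc _ rfl)
        rcases this with h1 | h1 | ⟨b, hb, hb1, hb2⟩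
        · exact Or.inl (by simp at h1; omega)
        · exact Or.inr (Or.inl (by simp at h1; omega))
        · exact Or.inr (Or.inr ⟨b, hb, by simp at hb1 hb2 ⊢; omega, by simp at hb1 hb2 ⊢; omega⟩)
      · exact Or.inr (Or.inl (by omega))
    · rcases Nat.lt_or_ge a.val 2 with h2 | h2
      · exact Or.inl (by omega)
      · have := ih j ⟨a.val - 2, by omega⟩ (hc _ (by simp; omega))
        rcases this with h1 | h1 | ⟨b, hb, hb1, hb2⟩
        · exact Or.inl (by simp at h1; omega)
        · exact Or.inr (Or.inl (by simp at h1; have := a.isLt; omega))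
        · exact Or.inr (Or.inr ⟨b, hb, by simp at hb1 hb2 ⊢; omega, by simp at hb1 hb2 ⊢; omega⟩)

/-- The counting consequence of coverage. -/
lemma cov_count {t : ℕ} (hfull : ∀ (j : Fin p) (a : Fin ℓ), Cov S (2 * t) j a.val) :
    p * ℓ ≤ (p + S.ncard) * (4 * t + 1) := by
  classical
  have perleg : ∀ j : Fin p, ℓ ≤ (4 * t + 1) *
      (1 + (Finset.univ.filter (fun b : Fin ℓ => lv j b ∈ S)).card) := by
    intro j
    set Sj := Finset.univ.filter (fun b : Fin ℓ => lv j b ∈ S) with hSj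
    have hsub : (Finset.univ : Finset (Fin ℓ)) ⊆
        ((Finset.univ.filter (fun a : Fin ℓ => a.val + 1 ≤ 2 * t)) ∪
         (Finset.univ.filter (fun a : Fin ℓ => ℓ - 1 - a.val ≤ 2 * t))) ∪
        Sj.biUnion (fun b => Finset.univ.filter
          (fun a : Fin ℓ => b.val ≤ 2 * t + a.val ∧ a.val ≤ 2 * t + b.val)) := by
      intro a _
      rcases hfull j a with h | h | ⟨b, hb, h1, h2⟩
      · exact Finset.mem_union_left _ (Finset.mem_union_left _ (by simp; omega))
      · exact Finset.mem_union_left _ (Finset.mem_union_right _ (by simp; omega))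
      · refine Finset.mem_union_right _ (Finset.mem_biUnion.mpr ⟨b, ?_, by simp [h1, h2]⟩)
        simp [hSj, hb]
    have c1 : (Finset.univ.filter (fun a : Fin ℓ => a.val + 1 ≤ 2 * t)).card ≤
        (Finset.range (2 * t)).card := by
      apply Finset.card_le_card_of_injOn (fun a : Fin ℓ => a.val)
      · intro a ha; simp at ha ⊢; omega
      · intro a _ a' _ h; exact Fin.ext h
    have c2 : (Finset.univ.filter (fun a : Fin ℓ => ℓ - 1 - a.val ≤ 2 * t)).card ≤
        (Finset.range (2 * t + 1)).card := by
      apply Finset.card_le_card_of_injOn (fun a : Fin ℓ => ℓ - 1 - a.val)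
      · intro a ha; simp at ha ⊢; omega
      · intro a _ a' _ h
        have h' : ℓ - 1 - a.val = ℓ - 1 - a'.val := h
        have := a.isLt; have := a'.isLt
        exact Fin.ext (by omega)
    have c3 : ∀ b : Fin ℓ, (Finset.univ.filter
        (fun a : Fin ℓ => b.val ≤ 2 * t + a.val ∧ a.val ≤ 2 * t + b.val)).card ≤
        (Finset.range (4 * t + 1)).card := by
      intro b
      apply Finset.card_le_card_of_injOn (fun a : Fin ℓ => 2 * t + a.val - b.val)
      · intro a ha; simp at ha ⊢; omega
      · intro a ha a' ha' h
        have h' : 2 * t + a.val - b.val = 2 * t + a'.val - b.val := h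
        simp only [Finset.mem_coe, Finset.mem_filter] at ha ha'
        exact Fin.ext (by omega)
    simp only [Finset.card_range] at c1 c2 c3
    calc ℓ = (Finset.univ : Finset (Fin ℓ)).card := by simp
    _ ≤ _ := Finset.card_le_card hsub
    _ ≤ (((Finset.univ.filter (fun a : Fin ℓ => a.val + 1 ≤ 2 * t)) ∪
         (Finset.univ.filter (fun a : Fin ℓ => ℓ - 1 - a.val ≤ 2 * t))).card +
         (Sj.biUnion (fun b => Finset.univ.filter
          (fun a : Fin ℓ => b.val ≤ 2 * t + a.val ∧ a.val ≤ 2 * t + b.val))).card) :=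
        Finset.card_union_le _ _
    _ ≤ (4 * t + 1) * (1 + Sj.card) := by
        have hb := Finset.card_biUnion_le (s := Sj) (t := fun b => Finset.univ.filter
          (fun a : Fin ℓ => b.val ≤ 2 * t + a.val ∧ a.val ≤ 2 * t + b.val))
        have hsum : ∑ b ∈ Sj, (Finset.univ.filter
            (fun a : Fin ℓ => b.val ≤ 2 * t + a.val ∧ a.val ≤ 2 * t + b.val)).card ≤
            Sj.card * (4 * t + 1) := by
          calc _ ≤ ∑ _b ∈ Sj, (4 * t + 1) := Finset.sum_le_sum (fun b _ => c3 b)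
          _ = Sj.card * (4 * t + 1) := by rw [Finset.sum_const, smul_eq_mul]
        have hu := Finset.card_union_le
          (Finset.univ.filter (fun a : Fin ℓ => a.val + 1 ≤ 2 * t))
          (Finset.univ.filter (fun a : Fin ℓ => ℓ - 1 - a.val ≤ 2 * t))
        nlinarith [hb, hsum, hu, c1, c2]
  have sumS : ∑ j : Fin p, (Finset.univ.filter (fun b : Fin ℓ => lv j b ∈ S)).card ≤
      S.ncard := by
    have hstep : ∑ j : Fin p, (Finset.univ.filter (fun b : Fin ℓ => lv j b ∈ S)).card =
        ((Finset.univ : Finset (Fin p × Fin ℓ)).filter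
          (fun x => lv x.1 x.2 ∈ S)).card := by
      rw [eq_comm, Finset.card_filter, Fintype.sum_prod_type]
      exact Finset.sum_congr rfl (fun j _ => (Finset.card_filter _ _).symm)
    rw [hstep, Set.ncard_eq_toFinset_card']
    apply Finset.card_le_card_of_injOn (fun x : Fin p × Fin ℓ => lv x.1 x.2)
    · intro x hx; simp at hx ⊢; exact hx
    · rintro ⟨j, a⟩ _ ⟨j', a'⟩ _ h
      simp only [lv, Sum.inr.injEq, Prod.mk.injEq] at h
      simp [h.1, h.2]
  calc p * ℓ = ∑ _j : Fin p, ℓ := by simp [mul_comm]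
  _ ≤ ∑ j : Fin p, (4 * t + 1) *
      (1 + (Finset.univ.filter (fun b : Fin ℓ => lv j b ∈ S)).card) :=
      Finset.sum_le_sum (fun j _ => perleg j)
  _ = (4 * t + 1) * (p + ∑ j : Fin p, (Finset.univ.filter
        (fun b : Fin ℓ => lv j b ∈ S)).card) := by
      rw [← Finset.mul_sum, Finset.sum_add_distrib]
      simp [mul_comm]
  _ ≤ (4 * t + 1) * (p + S.ncard) := by
      have := sumS; exact Nat.mul_le_mul_left _ (by omega)
  _ = (p + S.ncard) * (4 * t + 1) := mul_comm _ _

end Cover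

end SpiderAux

namespace SpiderAux

open SimpleGraph Set

section LowerMain

attribute [local instance] Classical.propDecidable

variable {p ℓ : ℕ} {S : Set (Unit ⊕ (Fin p × Fin ℓ))}

local notation "B" => skewIter (spider p ℓ) S

lemma touched_card_le :
    ((Finset.univ : Finset (Fin p)).filter
      (fun j => ¬ Untouched S j)).card ≤ S.ncard := by
  classical
  rw [Set.ncard_eq_toFinset_card']
  apply Finset.card_le_card_of_injOn (fun j : Fin p =>
    if h : ∃ a : Fin ℓ, lv j a ∈ S then lv j h.choose else ctr p ℓ)
  · intro j hj
    simp only [Finset.coe_filter, Set.mem_setOf_eq, Finset.mem_coe, Finset.mem_filter,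
      Finset.mem_univ, true_and, Untouched] at hj
    push_neg at hj
    obtain ⟨a, ha⟩ : ∃ a : Fin ℓ, lv j a ∈ S := by simpa [Untouched] using hj
    have hex : ∃ a : Fin ℓ, lv j a ∈ S := ⟨a, ha⟩
    simp only [dif_pos hex]
    simp only [Finset.mem_coe, Set.mem_toFinset]
    exact hex.choose_spec
  · intro j hj j' hj' h
    simp only [Finset.coe_filter, Set.mem_setOf_eq, Finset.mem_coe, Finset.mem_filter,
      Finset.mem_univ, true_and, Untouched] at hj hj'
    push_neg at hj hj'
    have hex : ∃ a : Fin ℓ, lv j a ∈ S := by simpa [Untouched] using hj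
    have hex' : ∃ a : Fin ℓ, lv j' a ∈ S := by simpa [Untouched] using hj'
    have h2 : (if h : ∃ a : Fin ℓ, lv j a ∈ S then lv j h.choose else ctr p ℓ) =
        (if h : ∃ a : Fin ℓ, lv j' a ∈ S then lv j' h.choose else ctr p ℓ) := h
    clear h
    rw [dif_pos hex, dif_pos hex'] at h2
    rename' h2 => h
    simp only [lv, Sum.inr.injEq, Prod.mk.injEq] at h
    exact h.1

lemma lower_main (hp : 2 ≤ p) (hℓ : 2 ≤ ℓ) (hzfs : IsSkewZFS (spider p ℓ) S) :
    ℓ ≤ 2 * (S.ncard + skewPt (spider p ℓ) S) ∨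
      p * ℓ ≤ 4 * (S.ncard + skewPt (spider p ℓ) S) ^ 2 := by
  classical
  set k := S.ncard with hk
  set t := skewPt (spider p ℓ) S with htdef
  have ht : B t = Set.univ := skewIter_skewPt _ _ hzfs
  have hmem : ∀ x : Unit ⊕ (Fin p × Fin ℓ), x ∈ B t := by
    intro x; rw [ht]; trivial
  by_cases h2u : ∃ j1 j2 : Fin p, j1 ≠ j2 ∧ Untouched S j1 ∧ Untouched S j2
  · -- two untouched legs : slow leg gives ℓ ≤ 2t
    obtain ⟨j1, j2, hne, hu1, hu2⟩ := h2u
    have h0 : (0 : ℕ) < ℓ := by omega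
    have := invE2 hne hu1 hu2 t j1 (Or.inl rfl) ⟨0, h0⟩ (by simp)
      (hmem (lv j1 ⟨0, h0⟩))
    simp only [Fin.val_mk] at this
    left; omega
  · by_cases h1u : ∃ j : Fin p, Untouched S j
    · -- exactly one untouched leg
      obtain ⟨j0, hu0⟩ := h1u
      -- k ≥ p - 1
      have hcard1 : ((Finset.univ : Finset (Fin p)).filter
          (fun j => Untouched S j)).card ≤ 1 := by
        apply Finset.card_le_one.mpr
        intro a ha b hb
        simp only [Finset.mem_filter] at ha hb
        by_contra hab
        exact h2u ⟨a, b, hab, ha.2, hb.2⟩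
      have hsplit := Finset.card_filter_add_card_filter_not
        (s := (Finset.univ : Finset (Fin p))) (p := fun j => Untouched S j)
      have hkp : p - 1 ≤ k := by
        have := touched_card_le (S := S)
        simp only [Finset.card_univ, Fintype.card_fin] at hsplit
        omega
      -- the middle of the untouched leg is slow : ℓ - 1 ≤ 4 t
      have hmid : ℓ - 1 ≤ 4 * t := by
        set c := ℓ / 2 with hc
        set a : ℕ := if c % 2 = 0 then c else c - 1 with ha
        have haprop : a % 2 = 0 ∧ a < ℓ ∧ ℓ - 1 ≤ 2 * (ℓ - a) ∧ ℓ - 1 ≤ 2 * (a + 2) := by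
          rw [ha]
          split <;> omega
        have := invE1 hu0 hℓ t ⟨a, haprop.2.1⟩ (by simpa using haprop.1)
          (hmem (lv j0 ⟨a, haprop.2.1⟩))
        simp only [Fin.val_mk] at this
        omega
      right
      have ht1 : 1 ≤ t := by omega
      have hk1 : 1 ≤ k := by omega
      have h1 : p * ℓ ≤ (k + 1) * (4 * t + 1) := Nat.mul_le_mul (by omega) (by omega)
      nlinarith [h1, ht1, hk1]
    · -- all legs touched : coverage count
      push_neg at h1u
      have hpk : p ≤ k := by
        have h1 : ((Finset.univ : Finset (Fin p)).filter
            (fun j => ¬ Untouched S j)) = Finset.univ := by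
          apply Finset.filter_true_of_mem
          intro j _; exact h1u j
        have := touched_card_le (S := S)
        rw [h1] at this
        simpa using this
      have hcount := cov_count (S := S) (t := t)
        (fun j a => cov_invariant t j a (hmem (lv j a)))
      right
      have hk2 : 2 ≤ k := le_trans hp hpk
      have h8 : (p + k) * (4 * t + 1) ≤ (k + k) * (4 * t + 1) :=
        Nat.mul_le_mul_right _ (by omega)
      nlinarith [hcount, h8, hk2]

lemma lower_odd (hp : 2 ≤ p) (hℓ : 2 ≤ ℓ) (hodd : ℓ % 2 = 1)
    (hzfs : IsSkewZFS (spider p ℓ) S) :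
    p ≤ 2 * (S.ncard + skewPt (spider p ℓ) S) ∧
      p * ℓ ≤ 4 * (S.ncard + skewPt (spider p ℓ) S) ^ 2 := by
  classical
  set k := S.ncard with hk
  set t := skewPt (spider p ℓ) S with htdef
  have ht : B t = Set.univ := skewIter_skewPt _ _ hzfs
  have hmem : ∀ x : Unit ⊕ (Fin p × Fin ℓ), x ∈ B t := by
    intro x; rw [ht]; trivial
  by_cases h2u : ∃ j1 j2 : Fin p, j1 ≠ j2 ∧ Untouched S j1 ∧ Untouched S j2
  · obtain ⟨j1, j2, hne, hu1, hu2⟩ := h2u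
    exact absurd (two_untouched_odd hne hu1 hu2 hodd hzfs hℓ) (not_false)
  · by_cases h1u : ∃ j : Fin p, Untouched S j
    · obtain ⟨j0, hu0⟩ := h1u
      have hcard1 : ((Finset.univ : Finset (Fin p)).filter
          (fun j => Untouched S j)).card ≤ 1 := by
        apply Finset.card_le_one.mpr
        intro a ha b hb
        simp only [Finset.mem_filter] at ha hb
        by_contra hab
        exact h2u ⟨a, b, hab, ha.2, hb.2⟩
      have hsplit := Finset.card_filter_add_card_filter_not
        (s := (Finset.univ : Finset (Fin p))) (p := fun j => Untouched S j)
      have hkp : p - 1 ≤ k := by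
        have := touched_card_le (S := S)
        simp only [Finset.card_univ, Fintype.card_fin] at hsplit
        omega
      have hlast : ℓ + 1 ≤ 2 * t := by
        have hlt : ℓ - 1 < ℓ := by omega
        have := invO1 hu0 hodd t ⟨ℓ - 1, hlt⟩ (by simp; omega)
          (hmem (lv j0 ⟨ℓ - 1, hlt⟩))
        simp only [Fin.val_mk] at this
        omega
      have ht1 : 1 ≤ t := by omega
      have hk1 : 1 ≤ k := by omega
      have h1 : p * ℓ ≤ (k + 1) * (2 * t) := Nat.mul_le_mul (by omega) (by omega)
      exact ⟨by omega, by nlinarith [h1, ht1, hk1]⟩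
    · push_neg at h1u
      have hpk : p ≤ k := by
        have h1 : ((Finset.univ : Finset (Fin p)).filter
            (fun j => ¬ Untouched S j)) = Finset.univ := by
          apply Finset.filter_true_of_mem
          intro j _; exact h1u j
        have := touched_card_le (S := S)
        rw [h1] at this
        simpa using this
      have hcount := cov_count (S := S) (t := t)
        (fun j a => cov_invariant t j a (hmem (lv j a)))
      have hk2 : 2 ≤ k := le_trans hp hpk
      have h8 : (p + k) * (4 * t + 1) ≤ (k + k) * (4 * t + 1) :=
        Nat.mul_le_mul_right _ (by omega)
      exact ⟨by omega, by nlinarith [hcount, h8, hk2]⟩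

end LowerMain

end SpiderAux

namespace SpiderAux

open SimpleGraph Set

section Upper

variable {p ℓ : ℕ}

/-- Center strategy for even `ℓ` : `th ≤ 1 + ℓ`. -/
lemma upper_center (hp : 1 ≤ p) (hℓ : 2 ≤ ℓ) (heven : ℓ % 2 = 0) :
    skewTh (spider p ℓ) ≤ 1 + ℓ := by
  classical
  set S : Set (Unit ⊕ (Fin p × Fin ℓ)) := {ctr p ℓ} with hS
  have hcard : S.ncard = 1 := Set.ncard_singleton _
  set τ : (Unit ⊕ (Fin p × Fin ℓ)) → ℕ := fun x =>
    Sum.elim (fun _ => 0)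
      (fun q => if q.2.val % 2 = 0 then (ℓ - q.2.val) / 2 else ℓ / 2 + (q.2.val + 1) / 2) x
    with hτ
  have hiter : skewIter (spider p ℓ) S ℓ = Set.univ := by
    apply sched _ _ τ ℓ
    · rintro (u | ⟨j, a⟩) h
      · simp [hS, ctr]
      · exfalso
        simp only [hτ, Sum.elim_inr] at h
        have := a.isLt
        split at h <;> omega
    · rintro (u | ⟨j, a⟩) h
      · exfalso; simp [hτ] at h
      · simp only [hτ, Sum.elim_inr] at h ⊢
        by_cases hpar : a.val % 2 = 0
        · -- forced from above by `a+1`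
          have halt : a.val + 1 < ℓ := by
            have := a.isLt
            rw [if_pos hpar] at h
            omega
          refine ⟨lv j ⟨a.val + 1, halt⟩, ?_, ?_⟩
          · exact spider_adj_lv_lv.mpr ⟨rfl, Or.inr (by simp)⟩
          · intro w hw hne
            rcases spider_adj_lv_iff.mp hw with ⟨h0, rfl⟩ | ⟨a', ha', rfl⟩
            · simp at h0
            · simp only [Fin.val_mk] at ha'
              have hne' : a'.val ≠ a.val := by
                intro hh
                exact hne (by simp [lv, Fin.ext_iff, hh])
              have ha'2 : a'.val = a.val + 2 := by omega
              have hlt2 : a.val + 2 < ℓ := ha'2 ▸ a'.isLt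
              simp only [Sum.elim_inr]
              split_ifs <;> omega
        · -- forced from below by `a-1`
          have ha1 : 1 ≤ a.val := by omega
          refine ⟨lv j ⟨a.val - 1, by omega⟩, ?_, ?_⟩
          · exact spider_adj_lv_lv.mpr ⟨rfl, Or.inl (by simp; omega)⟩
          · intro w hw hne
            rcases spider_adj_lv_iff.mp hw with ⟨h0, rfl⟩ | ⟨a', ha', rfl⟩
            · simp only [Sum.elim_inl]
              split_ifs <;> omega
            · simp only [Fin.val_mk] at ha'
              have hne' : a'.val ≠ a.val := by
                intro hh
                exact hne (by simp [lv, Fin.ext_iff, hh])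
              have ha'2 : a'.val + 2 = a.val := by omega
              simp only [Sum.elim_inr]
              split_ifs <;> omega
    · rintro (u | ⟨j, a⟩)
      · simp [hτ]
      · simp only [hτ, Sum.elim_inr]
        have := a.isLt
        split <;> omega
  calc skewTh (spider p ℓ) ≤ S.ncard + ℓ := skewTh_le _ _ hiter
  _ = 1 + ℓ := by rw [hcard]

/-- Leaf strategy : `th ≤ p + (ℓ - 1)`. -/
lemma upper_leaf (hp : 1 ≤ p) (hℓ : 2 ≤ ℓ) :
    skewTh (spider p ℓ) ≤ p + (ℓ - 1) := by
  classical
  have hlast : ℓ - 1 < ℓ := by omega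
  set F : Finset (Unit ⊕ (Fin p × Fin ℓ)) :=
    (Finset.univ : Finset (Fin p)).image (fun j => lv j ⟨ℓ - 1, hlast⟩) with hF
  set S : Set (Unit ⊕ (Fin p × Fin ℓ)) := ↑F with hS
  have hcard : S.ncard = p := by
    have hinj : Function.Injective (fun j : Fin p => lv j ⟨ℓ - 1, hlast⟩) := by
      intro x y hxy
      simpa [lv, Prod.ext_iff, Fin.ext_iff] using hxy
    rw [hS, Set.ncard_coe_finset, hF, Finset.card_image_of_injective _ hinj,
      Finset.card_univ, Fintype.card_fin]
  set τ : (Unit ⊕ (Fin p × Fin ℓ)) → ℕ := fun x =>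
    Sum.elim (fun _ => ℓ - 1) (fun q => ℓ - 1 - q.2.val) x with hτ
  have hmemS : ∀ j : Fin p, lv j ⟨ℓ - 1, hlast⟩ ∈ S := by
    intro j
    simp [hS, hF, lv]
  have hiter : skewIter (spider p ℓ) S (ℓ - 1) = Set.univ := by
    apply sched _ _ τ (ℓ - 1)
    · rintro (u | ⟨j, a⟩) h
      · exfalso; simp only [hτ, Sum.elim_inl] at h; omega
      · simp only [hτ, Sum.elim_inr] at h
        have := a.isLt
        have : a = ⟨ℓ - 1, hlast⟩ := by
          apply Fin.ext; simp; omega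
        rw [show (Sum.inr (j, a) : Unit ⊕ (Fin p × Fin ℓ)) = lv j a from rfl, this]
        exact hmemS j
    · rintro (u | ⟨j, a⟩) h
      · -- the center, forced by vertex 0 of leg 0
        have h0ℓ : (0 : ℕ) < ℓ := by omega
        refine ⟨lv ⟨0, by omega⟩ ⟨0, h0ℓ⟩, spider_adj_lv_ctr.mpr rfl, ?_⟩
        intro w hw hne
        rcases spider_adj_lv_iff.mp hw with ⟨h0, rfl⟩ | ⟨a', ha', rfl⟩
        · exact absurd rfl hne
        · simp only [Fin.val_mk] at ha'
          have ha'1 : a'.val = 1 := by omega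
          simp only [hτ, Sum.elim_inr, Sum.elim_inl, ha'1]
          omega
      · simp only [hτ, Sum.elim_inr] at h
        have halt : a.val + 1 < ℓ := by have := a.isLt; omega
        refine ⟨lv j ⟨a.val + 1, halt⟩, ?_, ?_⟩
        · exact spider_adj_lv_lv.mpr ⟨rfl, Or.inr (by simp)⟩
        · intro w hw hne
          rcases spider_adj_lv_iff.mp hw with ⟨h0, rfl⟩ | ⟨a', ha', rfl⟩
          · simp at h0
          · simp only [Fin.val_mk] at ha'
            have hne' : a'.val ≠ a.val := by
              intro hh
              exact hne (by simp [lv, Fin.ext_iff, hh])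
            have ha'2 : a'.val = a.val + 2 := by omega
            simp only [hτ, Sum.elim_inr]
            omega
    · rintro (u | ⟨j, a⟩)
      · simp [hτ]
      · simp only [hτ, Sum.elim_inr]; omega
  calc skewTh (spider p ℓ) ≤ S.ncard + (ℓ - 1) := skewTh_le _ _ hiter
  _ = p + (ℓ - 1) := by rw [hcard]

end Upper

end SpiderAux

namespace SpiderAux

open SimpleGraph Set

section UpperPairs

variable {p ℓ : ℕ}

lemma upper_pairs (hp : 1 ≤ p) (hℓ : 2 ≤ ℓ) (s m : ℕ) (hs : 1 ≤ s) (hm : 1 ≤ m)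
    (hfit : (4*s+2) * (m-1) + 2 ≤ ℓ) :
    skewTh (spider p ℓ) ≤
      1 + p * (2 * m) + max s ((ℓ - ((4*s+2)*(m-1) + 1)) / 2) := by
  classical
  set D := 4*s+2 with hD
  set P := D * (m-1) + 1 with hPdef
  have hD2 : 6 ≤ D := by omega
  have hPl : P + 1 ≤ ℓ := by omega
  have hP1 : P % D = 1 := by
    rw [hPdef, Nat.mul_add_mod]
    exact Nat.mod_eq_of_lt (by omega)
  have hPm : (P - 1) % D = 0 := by
    have : P - 1 = D * (m - 1) := by omega
    rw [this]
    exact Nat.mul_mod_right _ _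
  have hDm : D * (m - 1) + D = D * m := by
    rw [← Nat.mul_succ]
    congr 1
    omega
  -- the seed set
  have hxval : ∀ (T : Fin m) (c : Fin 2), D * T.val + c.val ≤ P := by
    intro T c
    have h1 : D * T.val ≤ D * (m-1) := Nat.mul_le_mul_left _ (by omega)
    have := c.isLt
    omega
  set f : Fin p × Fin m × Fin 2 → Unit ⊕ (Fin p × Fin ℓ) :=
    fun q => lv q.1 ⟨ℓ - 1 - (D * q.2.1.val + q.2.2.val), by omega⟩ with hf
  have hfinj : Function.Injective f := by
    rintro ⟨j, T, c⟩ ⟨j', T', c'⟩ h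
    simp only [hf, lv, Sum.inr.injEq, Prod.mk.injEq, Fin.mk.injEq] at h
    obtain ⟨rfl, hval⟩ := h
    have h1 := hxval T c
    have h2 := hxval T' c'
    have heq : D * T.val + c.val = D * T'.val + c'.val := by omega
    have hcc := c.isLt
    have hcc' := c'.isLt
    have hTT : T.val = T'.val := by
      rcases Nat.lt_trichotomy T.val T'.val with hlt | he | hlt
      · exfalso
        have h3 : D * (T.val + 1) ≤ D * T'.val := Nat.mul_le_mul_left _ hlt
        have h4 : D * (T.val + 1) = D * T.val + D := by ring
        omega
      · exact he
      · exfalso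
        have h3 : D * (T'.val + 1) ≤ D * T.val := Nat.mul_le_mul_left _ hlt
        have h4 : D * (T'.val + 1) = D * T'.val + D := by ring
        omega
    have hzz : D * T.val = D * T'.val := by rw [hTT]
    refine Prod.ext (by rfl) (Prod.ext ?_ ?_) <;> simp only []
    · exact Fin.ext hTT
    · exact Fin.ext (by omega)
  set F : Finset (Unit ⊕ (Fin p × Fin ℓ)) :=
    insert (ctr p ℓ) ((Finset.univ : Finset (Fin p × Fin m × Fin 2)).image f) with hF
  set S := (↑F : Set (Unit ⊕ (Fin p × Fin ℓ))) with hS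
  have hcard : S.ncard = 1 + p * (2 * m) := by
    rw [hS, Set.ncard_coe_finset, hF, Finset.card_insert_of_notMem,
      Finset.card_image_of_injective _ hfinj]
    · simp only [Finset.card_univ, Fintype.card_prod, Fintype.card_fin]
      ring
    · intro hcon
      obtain ⟨q, -, hq⟩ := Finset.mem_image.mp hcon
      exact absurd hq (by simp [hf, ctr, lv])
  have hmem_iff : ∀ (j : Fin p) (a : Fin ℓ),
      lv j a ∈ S ↔ (ℓ - 1 - a.val ≤ P ∧ (ℓ - 1 - a.val) % D ≤ 1) := by
    intro j a
    constructor
    · intro h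
      simp only [hS, hF, Finset.coe_insert, Set.mem_insert_iff, Finset.coe_image,
        Set.mem_image, Finset.mem_coe, Finset.mem_univ] at h
      rcases h with h | ⟨⟨j', T, c⟩, -, h⟩
      · exact absurd h (by simp [lv, ctr])
      · simp only [hf, lv, Sum.inr.injEq, Prod.mk.injEq] at h
        obtain ⟨rfl, hval⟩ := h
        have hval' : ℓ - 1 - (D * T.val + c.val) = a.val := congrArg Fin.val hval
        have h1 := hxval T c
        have hcc := c.isLt
        have hx : ℓ - 1 - a.val = D * T.val + c.val := by omega
        rw [hx, Nat.mul_add_mod]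
        exact ⟨by omega, by rw [Nat.mod_eq_of_lt (by omega)]; omega⟩
    · rintro ⟨h1, h2⟩
      set x := ℓ - 1 - a.val with hx
      have hdm : D * (x / D) + x % D = x := Nat.div_add_mod x D
      have hTlt : x / D < m := by
        rw [Nat.div_lt_iff_lt_mul (by omega)]
        have hcomm : m * D = D * m := Nat.mul_comm m D
        omega
      have hval : f (j, ⟨x / D, hTlt⟩, ⟨x % D, by omega⟩) = lv j a := by
        simp only [hf, lv, Sum.inr.injEq, Prod.mk.injEq]
        refine ⟨trivial, Fin.ext ?_⟩
        simp only [Fin.val_mk]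
        have := a.isLt
        omega
      rw [hS, hF, ← hval]
      exact Finset.mem_coe.mpr
        (Finset.mem_insert_of_mem (Finset.mem_image_of_mem f (Finset.mem_univ _)))
  -- the schedule
  set t0 := max s ((ℓ - P) / 2) with ht0
  set τ : (Unit ⊕ (Fin p × Fin ℓ)) → ℕ := fun v =>
    Sum.elim (fun _ => 0) (fun q =>
      if P + 1 ≤ ℓ - 1 - q.2.val then (ℓ - 1 - q.2.val - P + 1) / 2
      else if (ℓ - 1 - q.2.val) % D ≤ 1 then 0
      else if (ℓ - 1 - q.2.val) % D ≤ 2*s+1 then ((ℓ - 1 - q.2.val) % D) / 2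
      else (D - (ℓ - 1 - q.2.val) % D + 1) / 2) v with hτ
  have hiter : skewIter (spider p ℓ) S t0 = Set.univ := by
    apply sched _ _ τ t0
    · -- τ v = 0 → v ∈ S
      rintro (u | ⟨j, a⟩) h
      · simp [hS, hF, ctr]
      · simp only [hτ, Sum.elim_inr] at h
        have hmod : (ℓ - 1 - a.val) % D < D := Nat.mod_lt _ (by omega)
        split_ifs at h with h1 h2 h3
        · omega
        · exact (hmem_iff j a).mpr ⟨by omega, h2⟩
        · omega
        · omega
    · -- the forcing schedule
      rintro (u | ⟨j, a⟩) h
      · exfalso; simp [hτ] at h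
      · simp only [hτ, Sum.elim_inr] at h
        set x := ℓ - 1 - a.val with hx
        have hax : a.val = ℓ - 1 - x := by have := a.isLt; omega
        have haval := a.isLt
        have hxl : x ≤ ℓ - 1 := by omega
        have hmodlt : x % D < D := Nat.mod_lt _ (by omega)
        have hdm : D * (x / D) + x % D = x := Nat.div_add_mod x D
        by_cases hbot : P + 1 ≤ x
        · -- bottom region : forced from the leaf side
          have ha1 : a.val + 1 < ℓ := by omega
          refine ⟨lv j ⟨a.val + 1, ha1⟩, ?_, ?_⟩
          · exact spider_adj_lv_lv.mpr ⟨rfl, Or.inr (by simp)⟩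
          · intro w hw hne
            rcases spider_adj_lv_iff.mp hw with ⟨h0, rfl⟩ | ⟨a', ha', rfl⟩
            · simp at h0
            · simp only [Fin.val_mk] at ha'
              have hne' : a'.val ≠ a.val := by
                intro hh
                exact hne (by simp [lv, Fin.ext_iff, hh])
              have ha'2 : a'.val = a.val + 2 := by omega
              have hlt2 : a.val + 2 < ℓ := ha'2 ▸ a'.isLt
              have hx' : ℓ - 1 - a'.val = x - 2 := by omega
              simp only [hτ, Sum.elim_inr, hx']
              rw [← hx, if_pos hbot]
              by_cases hbb : P + 1 ≤ x - 2
              · rw [if_pos hbb]; omega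
              · rw [if_neg hbb]
                have : x - 2 = P - 1 ∨ x - 2 = P := by omega
                have hm2 : (x - 2) % D ≤ 1 := by
                  rcases this with h' | h' <;> rw [h'] <;> omega
                rw [if_pos hm2]
                omega
        · -- interior region
          set y := x % D with hy
          have hynot0 : ¬ y ≤ 1 := by
            intro hcon
            rw [if_neg hbot, if_pos hcon] at h
            exact h rfl
          by_cases hup : y ≤ 2*s+1
          · -- filled downwards from the pair closer to the leaf
            have hy2 : 2 ≤ y := by omega
            have hxge : 2 ≤ x := by
              have : y ≤ x := Nat.mod_le _ _
              omega
            have ha1 : a.val + 1 < ℓ := by omega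
            refine ⟨lv j ⟨a.val + 1, ha1⟩, ?_, ?_⟩
            · exact spider_adj_lv_lv.mpr ⟨rfl, Or.inr (by simp)⟩
            · intro w hw hne
              rcases spider_adj_lv_iff.mp hw with ⟨h0, rfl⟩ | ⟨a', ha', rfl⟩
              · simp at h0
              · simp only [Fin.val_mk] at ha'
                have hne' : a'.val ≠ a.val := by
                  intro hh
                  exact hne (by simp [lv, Fin.ext_iff, hh])
                have ha'2 : a'.val = a.val + 2 := by omega
                have hlt2 : a.val + 2 < ℓ := ha'2 ▸ a'.isLt
                have hx' : ℓ - 1 - a'.val = x - 2 := by omega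
                have hxm2 : (x - 2) % D = y - 2 := by
                  have he : x - 2 = D * (x / D) + (y - 2) := by omega
                  rw [he, Nat.mul_add_mod]
                  exact Nat.mod_eq_of_lt (by omega)
                simp only [hτ, Sum.elim_inr, hx']
                rw [← hx, if_neg hbot, if_neg (by omega : ¬ y ≤ 1), if_pos hup,
                  if_neg (by omega : ¬ P + 1 ≤ x - 2), hxm2]
                by_cases hss : y - 2 ≤ 1
                · rw [if_pos hss]; omega
                · rw [if_neg hss, if_pos (by omega : y - 2 ≤ 2*s+1)]; omega
          · -- filled upwards from the pair closer to the center
            have hyge : 2*s + 2 ≤ y := by omega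
            have hxne : x ≠ P ∧ x ≠ P - 1 := by
              constructor
              · intro hcon; rw [hy, hcon, hP1] at hyge; omega
              · intro hcon; rw [hy, hcon, hPm] at hyge; omega
            have hxP2 : x + 2 ≤ P := by omega
            have ha2 : 2 ≤ a.val := by omega
            refine ⟨lv j ⟨a.val - 1, by omega⟩, ?_, ?_⟩
            · exact spider_adj_lv_lv.mpr ⟨rfl, Or.inl (by simp; omega)⟩
            · intro w hw hne
              rcases spider_adj_lv_iff.mp hw with ⟨h0, rfl⟩ | ⟨a', ha', rfl⟩
              · -- the center : τ = 0 < τ v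
                simp only [hτ, Sum.elim_inl, Sum.elim_inr]
                rw [← hx, if_neg hbot, if_neg (by omega : ¬ y ≤ 1), if_neg hup]
                omega
              · simp only [Fin.val_mk] at ha'
                have hne' : a'.val ≠ a.val := by
                  intro hh
                  exact hne (by simp [lv, Fin.ext_iff, hh])
                have ha'2 : a'.val + 2 = a.val := by omega
                have hx' : ℓ - 1 - a'.val = x + 2 := by omega
                simp only [hτ, Sum.elim_inr, hx']
                rw [← hx, if_neg hbot, if_neg (by omega : ¬ y ≤ 1), if_neg hup,
                  if_neg (by omega : ¬ P + 1 ≤ x + 2)]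
                by_cases hy2D : y + 2 < D
                · have hxm2 : (x + 2) % D = y + 2 := by
                    have he : x + 2 = D * (x / D) + (y + 2) := by omega
                    rw [he, Nat.mul_add_mod]
                    exact Nat.mod_eq_of_lt hy2D
                  rw [hxm2, if_neg (by omega : ¬ y + 2 ≤ 1),
                    if_neg (by omega : ¬ y + 2 ≤ 2*s+1)]
                  omega
                · have hxm2 : (x + 2) % D = y + 2 - D := by
                    have hr : D * (x / D + 1) = D * (x / D) + D := by ring
                    have he : x + 2 = D * (x / D + 1) + (y + 2 - D) := by omega
                    rw [he, Nat.mul_add_mod]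
                    exact Nat.mod_eq_of_lt (by omega)
                  rw [hxm2, if_pos (by omega : y + 2 - D ≤ 1)]
                  omega
    · -- max bound
      rintro (u | ⟨j, a⟩)
      · simp [hτ]
      · simp only [hτ, Sum.elim_inr]
        have hmodlt : (ℓ - 1 - a.val) % D < D := Nat.mod_lt _ (by omega)
        have := a.isLt
        split_ifs <;> omega
  calc skewTh (spider p ℓ) ≤ S.ncard + t0 := skewTh_le _ _ hiter
  _ = 1 + p * (2 * m) + max s ((ℓ - ((4*s+2)*(m-1) + 1)) / 2) := by rw [hcard]

end UpperPairs

end SpiderAux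

namespace SpiderAux

open SimpleGraph Set

lemma le_three_sqrt {n : ℕ} {x : ℝ} (hx : 0 ≤ x) (h : (n:ℝ)^2 ≤ 9 * x) :
    (n:ℝ) ≤ 3 * Real.sqrt x := by
  nlinarith [Real.sq_sqrt hx, Real.sqrt_nonneg x, Nat.cast_nonneg (α := ℝ) n,
    sq_nonneg ((n:ℝ) - 3 * Real.sqrt x), sq_nonneg ((n:ℝ) + 3 * Real.sqrt x)]

lemma sqrt_le_of_sq {n : ℕ} {x : ℝ} (hx : 0 ≤ x) (h : x ≤ (n:ℝ)^2) :
    Real.sqrt x ≤ (n:ℝ) := by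
  nlinarith [Real.sq_sqrt hx, Real.sqrt_nonneg x, Nat.cast_nonneg (α := ℝ) n,
    sq_nonneg (Real.sqrt x - (n:ℝ)), sq_nonneg (Real.sqrt x + (n:ℝ))]

lemma nat_sqrt_cast_le {a : ℕ} : ((Nat.sqrt a : ℕ) : ℝ) ≤ Real.sqrt (a : ℝ) := by
  have h : ((Nat.sqrt a : ℕ):ℝ)^2 ≤ (a:ℝ) := by exact_mod_cast Nat.sqrt_le' a
  nlinarith [Real.sq_sqrt (show (0:ℝ) ≤ (a:ℝ) by positivity), Real.sqrt_nonneg (a:ℝ),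
    Nat.cast_nonneg (α := ℝ) (Nat.sqrt a),
    sq_nonneg (((Nat.sqrt a : ℕ):ℝ) - Real.sqrt (a:ℝ)),
    sq_nonneg (((Nat.sqrt a : ℕ):ℝ) + Real.sqrt (a:ℝ))]

end SpiderAux

open SpiderAux SimpleGraph

set_option maxHeartbeats 1000000 in

theorem skewTh_spider_bounds' (p ℓ : ℕ) (hp : 2 ≤ p) (hℓ : 2 ≤ ℓ) :
    (1 / 2 : ℝ) *
        (if Even ℓ then min (ℓ : ℝ) (Real.sqrt (p * ℓ))
          else max (p : ℝ) (Real.sqrt (p * ℓ))) ≤ (skewTh (spider p ℓ) : ℝ) ∧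
    (skewTh (spider p ℓ) : ℝ) ≤
      3 * (if Even ℓ then min (ℓ : ℝ) (Real.sqrt (p * ℓ))
            else max (p : ℝ) (Real.sqrt (p * ℓ))) := by
  have hpl0 : (0:ℝ) ≤ (p:ℝ) * ℓ := by positivity
  set A := Real.sqrt ((p:ℝ) * ℓ) with hA
  have hA2 : A^2 = (p:ℝ) * ℓ := Real.sq_sqrt hpl0
  have hA0 : 0 ≤ A := Real.sqrt_nonneg _
  have hp' : (2:ℝ) ≤ (p:ℝ) := by exact_mod_cast hp
  have hℓ' : (2:ℝ) ≤ (ℓ:ℝ) := by exact_mod_cast hℓ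
  constructor
  · -- LOWER BOUND
    obtain ⟨S, hzfs, hthe⟩ := skewTh_spec (spider p ℓ)
    rw [hthe]
    set K := S.ncard + skewPt (spider p ℓ) S with hK
    by_cases he : Even ℓ
    · rw [if_pos he]
      rcases lower_main hp hℓ hzfs with hcase | hcase
      all_goals rw [← hK] at hcase
      · have h1 : (ℓ:ℝ) ≤ 2 * ((K : ℕ) : ℝ) := by exact_mod_cast hcase
        have h2 : min (ℓ:ℝ) A ≤ (ℓ:ℝ) := min_le_left _ _
        linarith
      · have h2 : A ≤ ((2 * K : ℕ):ℝ) := by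
          apply sqrt_le_of_sq hpl0
          have : ((p * ℓ : ℕ):ℝ) ≤ (((2*K)^2 : ℕ):ℝ) := by
            exact_mod_cast (by nlinarith [hcase] : p * ℓ ≤ (2*K)^2)
          push_cast at this ⊢
          linarith
        have h3 : min (ℓ:ℝ) A ≤ A := min_le_right _ _
        push_cast at h2 ⊢
        linarith
    · rw [if_neg he]
      have hodd : ℓ % 2 = 1 := Nat.odd_iff.mp (Nat.not_even_iff_odd.mp he)
      obtain ⟨hc1, hc2⟩ := lower_odd hp hℓ hodd hzfs
      rw [← hK] at hc1 hc2
      have h1 : (p:ℝ) ≤ 2 * ((K : ℕ):ℝ) := by exact_mod_cast hc1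
      have h2 : A ≤ ((2 * K : ℕ):ℝ) := by
        apply sqrt_le_of_sq hpl0
        have : ((p * ℓ : ℕ):ℝ) ≤ (((2*K)^2 : ℕ):ℝ) := by
          exact_mod_cast (by nlinarith [hc2] : p * ℓ ≤ (2*K)^2)
        push_cast at this ⊢
        linarith
      push_cast at h2
      have h3 : max (p:ℝ) A ≤ 2 * ((K : ℕ):ℝ) := max_le h1 (by linarith)
      push_cast at h3 ⊢
      linarith
  · -- UPPER BOUND
    by_cases hpℓ : p ≤ ℓ
    · -- both parities : the bound is 3√(pℓ)
      have hpl' : (p:ℝ) ≤ (ℓ:ℝ) := by exact_mod_cast hpℓ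
      have hAℓ : A ≤ (ℓ:ℝ) := by
        apply sqrt_le_of_sq hpl0
        push_cast
        nlinarith [hp', hℓ', hpl']
      have hpA : (p:ℝ) ≤ A := by
        nlinarith [hA2, hA0, hp', hpl', sq_nonneg ((p:ℝ) - A), sq_nonneg ((p:ℝ) + A)]
      have hgoal : (skewTh (spider p ℓ) : ℝ) ≤ 3 * A := by
        by_cases hsplit : ℓ ≤ 20 * p
        · -- half-leg strategy
          have hbound : skewTh (spider p ℓ) ≤ 1 + p * 2 + max 1 ((ℓ - 1) / 2) := by
            calc skewTh (spider p ℓ) ≤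
                1 + p * (2 * 1) + max 1 ((ℓ - ((4*1+2)*(1-1) + 1)) / 2) :=
                  upper_pairs (by omega) hℓ 1 1 (le_refl 1) (le_refl 1) (by omega)
            _ = 1 + p * 2 + max 1 ((ℓ - 1) / 2) := by norm_num
          set q := (ℓ - 1) / 2 with hq
          have hsq : ((1 + p * 2 + max 1 q : ℕ):ℝ)^2 ≤ 9 * ((p:ℝ) * ℓ) := by
            have h20 : (ℓ:ℝ) ≤ 20 * (p:ℝ) := by exact_mod_cast hsplit
            rcases Nat.eq_zero_or_pos q with hq0 | hq0
            · have hℓ2 : ℓ = 2 := by omega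
              have hp2 : p = 2 := by omega
              subst hℓ2; subst hp2
              rw [hq0]
              norm_num
            · rw [max_eq_right hq0]
              have hql : 2*(q:ℝ) + 1 ≤ (ℓ:ℝ) := by
                exact_mod_cast (by omega : 2*q + 1 ≤ ℓ)
              push_cast
              nlinarith [mul_nonneg (sub_nonneg.mpr hpl') (sub_nonneg.mpr h20),
                hp', hℓ', hql, (by exact_mod_cast hq0 : (1:ℝ) ≤ (q:ℝ))]
          calc (skewTh (spider p ℓ) : ℝ) ≤ ((1 + p * 2 + max 1 q : ℕ):ℝ) := by
                exact_mod_cast hbound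
          _ ≤ 3 * A := le_three_sqrt hpl0 (by push_cast at hsq ⊢; linarith [hsq])
        · -- spaced-pairs strategy for long legs
          push_neg at hsplit
          set N := Nat.sqrt (p * ℓ) with hN
          have hNl : N * N ≤ p * ℓ := by
            have h := Nat.sqrt_le' (p * ℓ)
            rwa [pow_two] at h
          have hNh : p * ℓ < (N+1) * (N+1) := by
            have h := Nat.lt_succ_sqrt' (p * ℓ)
            rwa [Nat.succ_eq_add_one, pow_two] at h
          have hN2p5 : 2 * p + 5 ≤ N := by
            rw [hN]
            apply Nat.le_sqrt.mpr
            nlinarith [hp, hsplit]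
          obtain ⟨s, hs2, hs3⟩ : ∃ s, N + 1 ≤ 2*s+1 ∧ 2*s ≤ N + 2 :=
            ⟨(N+1)/2, by omega, by omega⟩
          have hs1 : 1 ≤ s := by omega
          obtain ⟨Q, R, hQR, hRlt⟩ : ∃ Q R, (4*s+2)*Q + R = ℓ - 2 ∧ R < 4*s+2 :=
            ⟨(ℓ-2)/(4*s+2), (ℓ-2)%(4*s+2), Nat.div_add_mod _ _,
              Nat.mod_lt _ (by omega)⟩
          have hQ1 : (Q+1) - 1 = Q := by omega
          have hfit : (4*s+2) * ((Q+1)-1) + 2 ≤ ℓ := by rw [hQ1]; omega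
          have hbound : skewTh (spider p ℓ) ≤ 1 + p * (2*(Q+1)) + (2*s+1) := by
            calc skewTh (spider p ℓ) ≤
                1 + p * (2 * (Q+1)) + max s ((ℓ - ((4*s+2)*((Q+1)-1) + 1)) / 2) :=
                  upper_pairs (by omega) hℓ s (Q+1) hs1 (by omega) hfit
            _ ≤ 1 + p * (2*(Q+1)) + (2*s+1) := by
                have hmx : max s ((ℓ - ((4*s+2)*((Q+1)-1) + 1)) / 2) ≤ 2*s+1 := by
                  apply max_le (by omega)
                  rw [hQ1]
                  omega
                omega
          -- key : 2 p Q ≤ N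
          have hkey : 2 * p * Q ≤ N := by
            have e1 : 2*p*Q*(2*s+1) = p * ((4*s+2)*Q) := by ring
            have e2 : p * ((4*s+2)*Q) ≤ p * (ℓ - 2) :=
              Nat.mul_le_mul_left _ (by omega)
            have e3 : p * (ℓ - 2) ≤ p * ℓ := Nat.mul_le_mul_left _ (by omega)
            have e4 : (N+1) * (N+1) ≤ (N+1) * (2*s+1) :=
              Nat.mul_le_mul_left _ hs2
            have e5 : 2*p*Q*(2*s+1) < (N+1) * (2*s+1) := by omega
            have := lt_of_mul_lt_mul_right e5 (Nat.zero_le (2*s+1))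
            omega
          have hbound2 : skewTh (spider p ℓ) ≤ 2*N + 2*p + 5 := by
            have hpm : p * (2*(Q+1)) = 2*p*Q + 2*p := by ring
            omega
          -- conclude
          have hNA : (N:ℝ) ≤ A := by
            rw [hN, hA]
            have := nat_sqrt_cast_le (a := p * ℓ)
            push_cast at this ⊢
            convert this using 2
          have h1 : (skewTh (spider p ℓ) : ℝ) ≤ 2*(N:ℝ) + 2*(p:ℝ) + 5 := by
            exact_mod_cast hbound2
          have h2 : 2*(p:ℝ) + 5 ≤ (N:ℝ) := by exact_mod_cast hN2p5
          linarith
      by_cases he : Even ℓ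
      · rw [if_pos he, min_eq_right hAℓ]; exact hgoal
      · rw [if_neg he, max_eq_right hpA]; exact hgoal
    · -- ℓ < p
      have hlp' : (ℓ:ℝ) ≤ (p:ℝ) := by exact_mod_cast (le_of_not_ge hpℓ)
      by_cases he : Even ℓ
      · rw [if_pos he]
        have hAge : (ℓ:ℝ) ≤ A := by
          nlinarith [hA2, hA0, hℓ', hlp', sq_nonneg ((ℓ:ℝ) - A), sq_nonneg ((ℓ:ℝ) + A)]
        rw [min_eq_left hAge]
        have hb := upper_center (p := p) (by omega) hℓ (Nat.even_iff.mp he)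
        have : (skewTh (spider p ℓ) : ℝ) ≤ 1 + ℓ := by exact_mod_cast hb
        linarith
      · rw [if_neg he]
        have hAle : A ≤ (p:ℝ) := by
          apply sqrt_le_of_sq hpl0
          push_cast
          nlinarith [hlp', hℓ', hp']
        rw [max_eq_left hAle]
        have hb := upper_leaf (p := p) (by omega) hℓ
        have h1 : (skewTh (spider p ℓ) : ℝ) ≤ (p:ℝ) + ((ℓ - 1 : ℕ):ℝ) := by
          exact_mod_cast hb
        have h2 : ((ℓ - 1 : ℕ):ℝ) ≤ (ℓ:ℝ) - 1 := by
          rw [Nat.cast_sub (by omega : 1 ≤ ℓ)]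
          norm_num
        linarith

/-- `(1/2)·f(p,ℓ) ≤ th₋(T_{p,ℓ}) ≤ 3·f(p,ℓ)` where `f(p,ℓ)` is
`min(ℓ, √(pℓ))` for even `ℓ` and `max(p, √(pℓ))` for odd `ℓ`. -/
theorem skewTh_spider_bounds (p ℓ : ℕ) (hp : 2 ≤ p) (hℓ : 2 ≤ ℓ) :
    (1 / 2 : ℝ) *
        (if Even ℓ then min (ℓ : ℝ) (Real.sqrt (p * ℓ))
          else max (p : ℝ) (Real.sqrt (p * ℓ))) ≤ (skewTh (spider p ℓ) : ℝ) ∧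
    (skewTh (spider p ℓ) : ℝ) ≤
      3 * (if Even ℓ then min (ℓ : ℝ) (Real.sqrt (p * ℓ))
            else max (p : ℝ) (Real.sqrt (p * ℓ))) := by
  exact skewTh_spider_bounds' p ℓ hp hℓ
end

section
/- For n ≥ 2, the hypercube graph Q_n satisfies th_-(Q_n) = 2^{n−1} + 1. -/
open SimpleGraph

namespace SkewHyp

variable {n : ℕ}

/-- flip coordinate `i` -/
def flp (x : Fin n → Bool) (i : Fin n) : Fin n → Bool := Function.update x i (!(x i))

@[simp] lemma flp_same (x : Fin n → Bool) (i : Fin n) : flp x i i = !(x i) := by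
  simp [flp]

lemma flp_other (x : Fin n → Bool) {i j : Fin n} (h : j ≠ i) : flp x i j = x j := by
  simp [flp, Function.update_of_ne h]

lemma flp_flp (x : Fin n → Bool) (i : Fin n) : flp (flp x i) i = x := by
  funext j
  by_cases h : j = i
  · subst h; simp
  · rw [flp_other _ h, flp_other _ h]

lemma flp_ne_self (x : Fin n → Bool) (i : Fin n) : flp x i ≠ x := by
  intro h
  have := congrFun h i
  rw [flp_same] at this
  exact Bool.not_ne_self _ this

lemma flp_inj {x : Fin n → Bool} {i j : Fin n} (h : flp x i = flp x j) : i = j := by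
  by_contra hij
  have h1 := congrFun h i
  rw [flp_same, flp_other x (show i ≠ j from hij)] at h1
  exact Bool.not_ne_self _ h1

lemma flp_comm (x : Fin n → Bool) {i j : Fin n} (h : i ≠ j) :
    flp (flp x i) j = flp (flp x j) i := by
  unfold flp
  rw [Function.update_of_ne h.symm, Function.update_of_ne h, Function.update_comm h]

lemma exu_iff (x y : Fin n → Bool) : (∃! i, x i ≠ y i) ↔ ∃ i, y = flp x i := by
  constructor
  · rintro ⟨i, hi, hu⟩
    refine ⟨i, funext fun j => ?_⟩
    by_cases hj : j = i
    · subst hj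
      rw [flp_same]
      revert hi; cases x j <;> cases y j <;> simp
    · rw [flp_other _ hj]
      by_contra hne
      exact hj (hu j (Ne.symm hne))
  · rintro ⟨i, rfl⟩
    refine ⟨i, ?_, fun j hj => ?_⟩
    · simp only [flp_same]
      cases x i <;> simp
    · simp only at hj
      by_contra hji
      rw [flp_other _ hji] at hj
      exact hj rfl

lemma adj_iff (x y : Fin n → Bool) : (hypercube n).Adj x y ↔ ∃ i, y = flp x i := by
  rw [hypercube, SimpleGraph.fromRel_adj]
  constructor
  · rintro ⟨hne, h | h⟩
    · exact (exu_iff x y).1 h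
    · obtain ⟨i, rfl⟩ := (exu_iff y x).1 h
      exact ⟨i, (flp_flp y i).symm⟩
  · rintro ⟨i, rfl⟩
    exact ⟨(flp_ne_self x i).symm, Or.inl ((exu_iff x (flp x i)).2 ⟨i, rfl⟩)⟩

end SkewHyp
namespace SkewHyp

variable {n : ℕ} [NeZero n]

noncomputable def eps (x : Fin n → Bool) (i j : Fin n) : ℝ :=
  if j ≤ i ∧ j ≠ 0 ∧ x j = true then -1 else 1

noncomputable def sgn (x : Fin n → Bool) (i : Fin n) : ℝ := ∏ j, eps x i j

lemma eps_mul_self (x : Fin n → Bool) (i j : Fin n) : eps x i j * eps x i j = 1 := by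
  unfold eps; split_ifs <;> norm_num

lemma sgn_mul_self (x : Fin n → Bool) (i : Fin n) : sgn x i * sgn x i = 1 := by
  unfold sgn
  rw [← Finset.prod_mul_distrib]
  simp [eps_mul_self]

lemma sgn_ne_zero (x : Fin n → Bool) (i : Fin n) : sgn x i ≠ 0 := by
  intro h
  have := sgn_mul_self x i
  rw [h] at this
  norm_num at this

lemma eps_flp_other (x : Fin n → Bool) {i j k : Fin n} (h : j ≠ k) :
    eps (flp x k) i j = eps x i j := by
  unfold eps
  rw [flp_other _ h]

lemma sgn_flp (x : Fin n → Bool) (k i : Fin n) :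
    sgn (flp x k) i = (if k ≤ i ∧ k ≠ 0 then -1 else 1) * sgn x i := by
  have h1 : sgn (flp x k) i = eps (flp x k) i k * ∏ j ∈ Finset.univ.erase k, eps x i j := by
    rw [sgn, ← Finset.mul_prod_erase Finset.univ _ (Finset.mem_univ k)]
    congr 1
    exact Finset.prod_congr rfl fun j hj => eps_flp_other x (Finset.mem_erase.1 hj).1
  have h2 : sgn x i = eps x i k * ∏ j ∈ Finset.univ.erase k, eps x i j := by
    rw [sgn, ← Finset.mul_prod_erase Finset.univ _ (Finset.mem_univ k)]
  have h3 : eps (flp x k) i k = (if k ≤ i ∧ k ≠ 0 then -1 else 1) * eps x i k := by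
    unfold eps
    by_cases hc : k ≤ i ∧ k ≠ 0
    · rw [flp_same]
      cases hxk : x k <;> simp [hc, hxk]
    · simp only [hc]
      have : ¬(k ≤ i ∧ k ≠ 0 ∧ (flp x k) k = true) := fun h => hc ⟨h.1, h.2.1⟩
      have h' : ¬(k ≤ i ∧ k ≠ 0 ∧ x k = true) := fun h => hc ⟨h.1, h.2.1⟩
      rw [if_neg this, if_neg h']
      norm_num
  rw [h1, h3, h2]
  ring

lemma sgn_flp_self {x : Fin n → Bool} {i : Fin n} (hi : i ≠ 0) :
    sgn (flp x i) i = -(sgn x i) := by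
  rw [sgn_flp, if_pos ⟨le_refl i, hi⟩]
  ring

lemma sgn_flp_zero (x : Fin n → Bool) (i : Fin n) : sgn (flp x 0) i = sgn x i := by
  rw [sgn_flp, if_neg (fun h => h.2 rfl), one_mul]

/-- antisymmetry: for `i ≠ j` both nonzero. -/
lemma sgn_anti {x : Fin n → Bool} {i j : Fin n} (hi : i ≠ 0) (hj : j ≠ 0) (hij : i ≠ j) :
    sgn x i * sgn (flp x i) j = -(sgn x j * sgn (flp x j) i) := by
  rcases le_total i j with h | h
  · rw [sgn_flp x i j, if_pos ⟨h, hi⟩, sgn_flp x j i,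
      if_neg (fun hc => hij (le_antisymm h hc.1))]
    ring
  · rw [sgn_flp x j i, if_pos ⟨h, hj⟩, sgn_flp x i j,
      if_neg (fun hc => hij (le_antisymm hc.1 h))]
    ring

end SkewHyp
namespace SkewHyp

variable {n : ℕ} [NeZero n]

noncomputable def cst (n : ℕ) : ℝ := Real.sqrt ((n : ℝ) - 1)

lemma cst_pos (hn : 2 ≤ n) : 0 < cst n := by
  apply Real.sqrt_pos.2
  have : (2 : ℝ) ≤ (n : ℝ) := by exact_mod_cast hn
  linarith

lemma cst_sq (hn : 2 ≤ n) : cst n * cst n = (n : ℝ) - 1 := by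
  apply Real.mul_self_sqrt
  have : (2 : ℝ) ≤ (n : ℝ) := by exact_mod_cast hn
  linarith

noncomputable def wt (x : Fin n → Bool) (i : Fin n) : ℝ :=
  if i = 0 then (if x 0 = false then cst n else -(cst n)) else sgn x i

lemma wt_ne_zero (hn : 2 ≤ n) (x : Fin n → Bool) (i : Fin n) : wt x i ≠ 0 := by
  unfold wt
  have hc := cst_pos hn
  split_ifs
  · linarith
  · intro h; rw [neg_eq_zero] at h; linarith
  · exact sgn_ne_zero x i

lemma wt_zero (x : Fin n → Bool) : wt x 0 = if x 0 = false then cst n else -(cst n) := by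
  rw [wt, if_pos rfl]

lemma wt_coord {i : Fin n} (hi : i ≠ 0) (x : Fin n → Bool) : wt x i = sgn x i := by
  rw [wt, if_neg hi]

noncomputable def Amat (x y : Fin n → Bool) : ℝ := ∑ i, if y = flp x i then wt x i else 0

lemma Amat_flp (x : Fin n → Bool) (i : Fin n) : Amat x (flp x i) = wt x i := by
  unfold Amat
  rw [Finset.sum_eq_single i (fun j _ hj => if_neg (fun h => hj (flp_inj h).symm))
    (fun h => absurd (Finset.mem_univ i) h)]
  rw [if_pos rfl]

lemma Amat_ne_imp {x y : Fin n → Bool} (h : Amat x y ≠ 0) : ∃ i, y = flp x i := by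
  by_contra hc
  push_neg at hc
  exact h (Finset.sum_eq_zero fun i _ => if_neg (hc i))

lemma sum_Amat_mul (x : Fin n → Bool) (g : (Fin n → Bool) → ℝ) :
    ∑ y, Amat x y * g y = ∑ i, wt x i * g (flp x i) := by
  unfold Amat
  have h1 : ∀ y, (∑ i, if y = flp x i then wt x i else 0) * g y
      = ∑ i, if y = flp x i then wt x i * g y else 0 := by
    intro y
    rw [Finset.sum_mul]
    exact Finset.sum_congr rfl fun i _ => by split_ifs <;> simp
  rw [Finset.sum_congr rfl fun y _ => h1 y, Finset.sum_comm]
  refine Finset.sum_congr rfl fun i _ => ?_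
  rw [Finset.sum_ite_eq' Finset.univ (flp x i) (fun y => wt x i * g y),
    if_pos (Finset.mem_univ _)]

noncomputable def kv (g : (Fin n → Bool) → ℝ) (x : Fin n → Bool) : ℝ :=
  if x 0 = false then g x
  else -(cst n)⁻¹ * ∑ i ∈ Finset.univ.erase 0, sgn (flp x 0) i * g (flp (flp x 0) i)

lemma kv_bot {x : Fin n → Bool} (h : x 0 = false) (g : (Fin n → Bool) → ℝ) :
    kv g x = g x := by rw [kv, if_pos h]

lemma kv_top {x : Fin n → Bool} (h : x 0 = true) (g : (Fin n → Bool) → ℝ) :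
    kv g x = -(cst n)⁻¹ * ∑ i ∈ Finset.univ.erase 0,
      sgn (flp x 0) i * g (flp (flp x 0) i) := by
  rw [kv, if_neg (by rw [h]; exact fun h => Bool.noConfusion h)]

lemma sum_antisym {ι : Type*} (s : Finset ι) (G : ι → ι → ℝ)
    (h : ∀ i ∈ s, ∀ j ∈ s, G i j = -G j i) : ∑ i ∈ s, ∑ j ∈ s, G i j = 0 := by
  have h2 : (∑ i ∈ s, ∑ j ∈ s, G i j) = -∑ i ∈ s, ∑ j ∈ s, G i j := by
    calc ∑ i ∈ s, ∑ j ∈ s, G i j = ∑ j ∈ s, ∑ i ∈ s, G i j := Finset.sum_comm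
    _ = ∑ j ∈ s, ∑ i ∈ s, -G j i :=
        Finset.sum_congr rfl fun j hj => Finset.sum_congr rfl fun i hi => h i hi j hj
    _ = -∑ j ∈ s, ∑ i ∈ s, G j i := by
        rw [← Finset.sum_neg_distrib]
        exact Finset.sum_congr rfl fun j _ => Finset.sum_neg_distrib (G j)
  linarith

lemma card_erase_zero : (Finset.univ.erase (0 : Fin n)).card = n - 1 := by
  rw [Finset.card_erase_of_mem (Finset.mem_univ _), Finset.card_univ, Fintype.card_fin]

lemma double_sum (b : Fin n → Bool) (g : (Fin n → Bool) → ℝ) :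
    ∑ i ∈ Finset.univ.erase (0 : Fin n), ∑ j ∈ Finset.univ.erase (0 : Fin n),
      sgn b i * (sgn (flp b i) j * g (flp (flp b i) j))
    = -(((n : ℝ) - 1) * g b) := by
  set s := Finset.univ.erase (0 : Fin n) with hs
  set F : Fin n → Fin n → ℝ :=
    fun i j => sgn b i * (sgn (flp b i) j * g (flp (flp b i) j)) with hF
  have hsplit : ∀ i ∈ s, ∑ j ∈ s, F i j
      = F i i + ∑ j ∈ s, (if j = i then 0 else F i j) := by
    intro i hi
    have : ∀ j ∈ s, F i j = (if j = i then F i i else 0) + (if j = i then 0 else F i j) := by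
      intro j _
      split_ifs with h
      · rw [h]; ring
      · ring
    rw [Finset.sum_congr rfl this, Finset.sum_add_distrib,
      Finset.sum_ite_eq' s i (fun _ => F i i), if_pos hi]
  have hanti : ∑ i ∈ s, ∑ j ∈ s, (if j = i then 0 else F i j) = 0 := by
    apply sum_antisym
    intro i hi j hj
    rcases Finset.mem_erase.1 hi with ⟨hi0, _⟩
    rcases Finset.mem_erase.1 hj with ⟨hj0, _⟩
    by_cases hij : j = i
    · subst hij; simp
    · rw [if_neg hij, if_neg (Ne.symm hij), hF]
      dsimp only
      have hcomm : flp (flp b i) j = flp (flp b j) i := flp_comm b (Ne.symm hij)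
      rw [hcomm]
      have hanti2 := sgn_anti (x := b) hi0 hj0 (Ne.symm hij)
      linear_combination g (flp (flp b j) i) * hanti2
  have hdiag : ∀ i ∈ s, F i i = -(g b) := by
    intro i hi
    rcases Finset.mem_erase.1 hi with ⟨hi0, _⟩
    rw [hF]
    simp only
    rw [sgn_flp_self hi0, flp_flp]
    have hss := sgn_mul_self b i
    linear_combination (-(g b)) * hss
  calc ∑ i ∈ s, ∑ j ∈ s, F i j
      = ∑ i ∈ s, (F i i + ∑ j ∈ s, (if j = i then 0 else F i j)) :=
        Finset.sum_congr rfl hsplit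
    _ = ∑ i ∈ s, F i i + ∑ i ∈ s, ∑ j ∈ s, (if j = i then 0 else F i j) :=
        Finset.sum_add_distrib
    _ = ∑ i ∈ s, -(g b) + 0 := by rw [hanti, Finset.sum_congr rfl hdiag]
    _ = -(((n : ℝ) - 1) * g b) := by
        rw [add_zero, Finset.sum_const, card_erase_zero]
        have h1 : 1 ≤ n := Nat.one_le_iff_ne_zero.2 (NeZero.ne n)
        have : ((n - 1 : ℕ) : ℝ) = (n : ℝ) - 1 := by
          push_cast [h1]; ring
        rw [nsmul_eq_mul, this]
        ring

end SkewHyp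
namespace SkewHyp

variable {n : ℕ} [NeZero n]

lemma ker_kv (hn : 2 ≤ n) (g : (Fin n → Bool) → ℝ) (v : Fin n → Bool) :
    ∑ y, Amat v y * kv g y = 0 := by
  have hc := cst_pos hn
  have hcsq := cst_sq hn
  have hcne : cst n ≠ 0 := ne_of_gt hc
  rw [sum_Amat_mul]
  rw [← Finset.add_sum_erase Finset.univ _ (Finset.mem_univ (0 : Fin n))]
  set s := Finset.univ.erase (0 : Fin n) with hs
  have hflp0 : ∀ (x : Fin n → Bool), (flp x 0) 0 = !(x 0) := fun x => flp_same x 0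
  have hflpi : ∀ (x : Fin n → Bool), ∀ i ∈ s, (flp x i) 0 = x 0 := by
    intro x i hi
    exact flp_other x (Ne.symm (Finset.mem_erase.1 hi).1)
  by_cases hv : v 0 = false
  · -- bottom vertex
    have h00 : (flp v 0) 0 = true := by rw [hflp0, hv]; rfl
    rw [wt_zero, if_pos hv, kv_top h00, flp_flp]
    have hrest : ∀ i ∈ s, wt v i * kv g (flp v i) = sgn v i * g (flp v i) := by
      intro i hi
      rw [wt_coord (Finset.mem_erase.1 hi).1, kv_bot (by rw [hflpi v i hi, hv])]
    rw [Finset.sum_congr rfl hrest]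
    have key : ∀ X : ℝ, cst n * (-(cst n)⁻¹ * X) + X = 0 := by
      intro X; field_simp; ring
    exact key _
  · -- top vertex
    have hv' : v 0 = true := by revert hv; cases v 0 <;> simp
    set b := flp v 0 with hb
    have hb0 : b 0 = false := by rw [hb, hflp0, hv']; rfl
    have hvb : v = flp b 0 := by rw [hb, flp_flp]
    rw [wt_zero, if_neg (by rw [hv']; exact fun h => Bool.noConfusion h), kv_bot hb0]
    have hrest : ∀ i ∈ s, wt v i * kv g (flp v i)
        = -(cst n)⁻¹ * ∑ j ∈ s, sgn b i * (sgn (flp b i) j * g (flp (flp b i) j)) := by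
      intro i hi
      have hi0 : i ≠ 0 := (Finset.mem_erase.1 hi).1
      have htop : (flp v i) 0 = true := by rw [hflpi v i hi, hv']
      have hkey : flp (flp v i) 0 = flp b i := by
        rw [hb, flp_comm v hi0]
      rw [wt_coord hi0, kv_top htop, hkey]
      have hsgn : sgn v i = sgn b i := by rw [hvb, sgn_flp_zero]
      have swap : ∀ (a K : ℝ) (t : Fin n → ℝ),
          a * (K * ∑ j ∈ s, t j) = K * ∑ j ∈ s, a * t j := by
        intro a K t
        rw [← Finset.mul_sum]
        ring
      rw [hsgn]
      exact swap _ _ _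
    rw [Finset.sum_congr rfl hrest, ← Finset.mul_sum, double_sum b g]
    have : -(cst n) * g b + -(cst n)⁻¹ * -(((n : ℝ) - 1) * g b) = 0 := by
      rw [← hcsq]
      field_simp
      ring
    exact this

end SkewHyp
namespace SkewHyp

variable {n : ℕ} [NeZero n]

lemma vanish_step (hn : 2 ≤ n) (u : (Fin n → Bool) → ℝ)
    (hker : ∀ v, ∑ y, Amat v y * u y = 0) (B : Set (Fin n → Bool))
    (hB : ∀ x ∈ B, u x = 0) :
    ∀ x ∈ skewStep (hypercube n) B, u x = 0 := by
  intro x hx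
  simp only [skewStep, Set.mem_union, Set.mem_setOf_eq] at hx
  rcases hx with hx | hx
  · exact hB x hx
  · obtain ⟨v, hadj, hforce⟩ := hx
    have hsum := hker v
    have hx_adj : Amat v x ≠ 0 := by
      obtain ⟨i, hi⟩ := (adj_iff v x).1 hadj
      rw [hi, Amat_flp]
      exact wt_ne_zero hn v i
    have hsingle : ∑ y, Amat v y * u y = Amat v x * u x := by
      apply Finset.sum_eq_single x
      · intro y _ hy
        by_cases hA : Amat v y = 0
        · rw [hA, zero_mul]
        · have hady : (hypercube n).Adj v y := by
            obtain ⟨i, hi⟩ := Amat_ne_imp hA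
            rw [hi]; exact (adj_iff v _).2 ⟨i, rfl⟩
          by_cases hyB : y ∈ B
          · rw [hB y hyB, mul_zero]
          · exact absurd (hforce y hady hyB) hy
      · intro h; exact absurd (Finset.mem_univ x) h
    rw [hsingle] at hsum
    exact (mul_eq_zero.1 hsum).resolve_left hx_adj

lemma vanish_iter (hn : 2 ≤ n) (u : (Fin n → Bool) → ℝ)
    (hker : ∀ v, ∑ y, Amat v y * u y = 0) (S : Set (Fin n → Bool))
    (hS : ∀ x ∈ S, u x = 0) :
    ∀ t, ∀ x ∈ skewIter (hypercube n) S t, u x = 0 := by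
  intro t
  induction t with
  | zero => exact hS
  | succ t ih => exact vanish_step hn u hker _ ih

noncomputable def kvL : ((Fin n → Bool) → ℝ) →ₗ[ℝ] ((Fin n → Bool) → ℝ) where
  toFun := kv
  map_add' g h := by
    funext x
    by_cases hx : x 0 = false
    · simp [kv_bot hx]
    · have hx' : x 0 = true := by revert hx; cases x 0 <;> simp
      simp only [kv_top hx', Pi.add_apply]
      rw [← mul_add, ← Finset.sum_add_distrib]
      congr 1
      exact Finset.sum_congr rfl fun j _ => by ring
  map_smul' c g := by
    funext x
    by_cases hx : x 0 = false
    · simp [kv_bot hx]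
    · have hx' : x 0 = true := by revert hx; cases x 0 <;> simp
      simp only [kv_top hx', Pi.smul_apply, smul_eq_mul, RingHom.id_apply]
      rw [show (∑ i ∈ Finset.univ.erase (0 : Fin n),
            sgn (flp x 0) i * (c * g (flp (flp x 0) i)))
          = c * ∑ i ∈ Finset.univ.erase (0 : Fin n),
            sgn (flp x 0) i * g (flp (flp x 0) i) from by
        rw [Finset.mul_sum]
        exact Finset.sum_congr rfl fun j _ => by ring]
      ring

noncomputable def extL :
    ({x : Fin n → Bool // x 0 = false} → ℝ) →ₗ[ℝ] ((Fin n → Bool) → ℝ) where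
  toFun f := fun x => if h : x 0 = false then f ⟨x, h⟩ else 0
  map_add' f h := by funext x; by_cases hx : x 0 = false <;> simp [hx]
  map_smul' c f := by funext x; by_cases hx : x 0 = false <;> simp [hx]

lemma card_bot : Nat.card {x : Fin n → Bool // x 0 = false} = 2 ^ (n - 1) := by
  classical
  have hn1 : 1 ≤ n := Nat.one_le_iff_ne_zero.2 (NeZero.ne n)
  have h4 : 2 ^ n = 2 ^ (n - 1) * 2 := by
    rw [← pow_succ]
    exact congrArg (2 ^ ·) (by omega)
  have e : {x : Fin n → Bool // x 0 = false} ≃ {x : Fin n → Bool // ¬(x 0 = false)} :=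
    { toFun := fun x => ⟨flp x.1 0, by rw [flp_same, x.2]; simp⟩
      invFun := fun x => ⟨flp x.1 0, by
        rcases x with ⟨x, hx⟩
        simp only [flp_same]
        revert hx; cases x 0 <;> simp⟩
      left_inv := fun x => Subtype.ext (flp_flp x.1 0)
      right_inv := fun x => Subtype.ext (flp_flp x.1 0) }
  have h1 : Fintype.card {x : Fin n → Bool // x 0 = false}
      = Fintype.card {x : Fin n → Bool // ¬(x 0 = false)} := Fintype.card_congr e
  have h3 : Fintype.card (Fin n → Bool) = 2 ^ n := by simp
  have hadd : Fintype.card {x : Fin n → Bool // x 0 = false}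
      + Fintype.card {x : Fin n → Bool // ¬(x 0 = false)} = 2 ^ n := by
    rw [← h3, ← Fintype.card_sum]
    exact Fintype.card_congr (Equiv.sumCompl _)
  rw [← h1, h4] at hadd
  rw [Nat.card_eq_fintype_card]
  exact Nat.eq_of_mul_eq_mul_left two_pos (by rw [two_mul, hadd, mul_comm])

lemma zfs_lower (hn : 2 ≤ n) (S : Set (Fin n → Bool))
    (hS : IsSkewZFS (hypercube n) S) : 2 ^ (n - 1) ≤ S.ncard := by
  classical
  obtain ⟨t, ht⟩ := hS
  let Φ : ({x : Fin n → Bool // x 0 = false} → ℝ) →ₗ[ℝ] ({x : Fin n → Bool // x ∈ S} → ℝ) :=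
    (LinearMap.funLeft ℝ ℝ (fun s : {x : Fin n → Bool // x ∈ S} => s.1)).comp (kvL.comp extL)
  have hinj : Function.Injective Φ := by
    rw [← LinearMap.ker_eq_bot, LinearMap.ker_eq_bot']
    intro f hf
    have hker := ker_kv hn (extL f)
    have hvan : ∀ x ∈ S, kv (extL f) x = 0 := by
      intro x hx
      have h0 := congrFun hf (⟨x, hx⟩ : {x : Fin n → Bool // x ∈ S})
      simpa [Φ, kvL, extL, LinearMap.funLeft] using h0
    have hall : ∀ x, kv (extL f) x = 0 := by
      intro x
      exact vanish_iter hn (kv (extL f)) hker S hvan t x (ht ▸ Set.mem_univ x)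
    funext b
    have hb := hall b.1
    rw [kv_bot b.2] at hb
    simpa [extL, b.2] using hb
  have h1 := LinearMap.finrank_le_finrank_of_injective hinj
  rw [Module.finrank_pi, Module.finrank_pi] at h1
  calc 2 ^ (n - 1) = Nat.card {x : Fin n → Bool // x 0 = false} := card_bot.symm
    _ = Fintype.card {x : Fin n → Bool // x 0 = false} := Nat.card_eq_fintype_card
    _ ≤ Fintype.card {x : Fin n → Bool // x ∈ S} := h1
    _ = Nat.card {x : Fin n → Bool // x ∈ S} := Nat.card_eq_fintype_card.symm
    _ = S.ncard := Nat.card_coe_set_eq S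

end SkewHyp

namespace SkewHyp

lemma step_S0 {n : ℕ} [NeZero n] :
    skewStep (hypercube n) {x : Fin n → Bool | x 0 = false} = Set.univ := by
  ext w
  simp only [skewStep, Set.mem_union, Set.mem_setOf_eq, Set.mem_univ, iff_true]
  by_cases hw : w 0 = false
  · exact Or.inl hw
  · right
    have hw' : w 0 = true := by revert hw; cases w 0 <;> simp
    refine ⟨flp w 0, ?_, ?_⟩
    · rw [adj_iff]; exact ⟨0, (flp_flp w 0).symm⟩
    · intro u hadj huS
      obtain ⟨i, rfl⟩ := (adj_iff _ u).1 hadj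
      by_cases hi : i = 0
      · subst hi; rw [flp_flp]
      · exfalso
        apply huS
        show (flp (flp w 0) i) 0 = false
        rw [flp_other _ (Ne.symm hi), flp_same, hw']
        rfl

end SkewHyp

/-- for `n ≥ 2`, the hypercube satisfies `th₋(Qₙ) = 2^(n-1) + 1`. -/
theorem skewTh_hypercube (n : ℕ) (hn : 2 ≤ n) :
    skewTh (hypercube n) = 2 ^ (n - 1) + 1 := by
  classical
  haveI : NeZero n := ⟨by omega⟩
  have hpow : 2 ^ n = 2 ^ (n - 1) * 2 := by
    rw [← pow_succ]
    exact congrArg (2 ^ ·) (by omega)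
  have hpow1 : 1 ≤ 2 ^ (n - 1) := Nat.one_le_two_pow
  set S0 : Set (Fin n → Bool) := {x | x 0 = false} with hS0def
  have hiter1 : skewIter (hypercube n) S0 1 = Set.univ := SkewHyp.step_S0
  have hzfs : IsSkewZFS (hypercube n) S0 := ⟨1, hiter1⟩
  have hS0card : S0.ncard = 2 ^ (n - 1) := by
    rw [← Nat.card_coe_set_eq]
    exact SkewHyp.card_bot
  have hS0ne : S0 ≠ Set.univ := by
    intro h
    have h2 : (fun _ : Fin n => true) ∈ S0 := h ▸ Set.mem_univ _
    have h3 : (fun _ : Fin n => true) 0 = false := h2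
    exact Bool.noConfusion h3
  have hpt : skewPt (hypercube n) S0 = 1 := by
    rw [skewPt]
    apply le_antisymm
    · exact Nat.sInf_le hiter1
    · by_contra h
      push_neg at h
      have h0 : sInf {k | skewIter (hypercube n) S0 k = Set.univ} = 0 := by omega
      rcases Nat.sInf_eq_zero.1 h0 with h0' | h0'
      · exact hS0ne h0'
      · rw [Set.eq_empty_iff_forall_notMem] at h0'
        exact h0' 1 hiter1
  have hmem : 2 ^ (n - 1) + 1 ∈ {m | ∃ S : Set (Fin n → Bool),
      IsSkewZFS (hypercube n) S ∧ m = S.ncard + skewPt (hypercube n) S} :=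
    ⟨S0, hzfs, by rw [hS0card, hpt]⟩
  rw [skewTh]
  apply le_antisymm
  · exact Nat.sInf_le hmem
  · apply le_csInf ⟨_, hmem⟩
    rintro m ⟨S, hS, rfl⟩
    by_cases hpt0 : skewPt (hypercube n) S = 0
    · have hne : {k | skewIter (hypercube n) S k = Set.univ}.Nonempty := hS
      have hmem0 := Nat.sInf_mem hne
      rw [show sInf {k | skewIter (hypercube n) S k = Set.univ}
          = skewPt (hypercube n) S from rfl, hpt0] at hmem0
      have hSuniv : S = Set.univ := hmem0
      have hcard : S.ncard = 2 ^ n := by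
        rw [hSuniv, Set.ncard_univ, Nat.card_eq_fintype_card]
        simp
      rw [hcard, hpt0]
      omega
    · have h1 : 1 ≤ skewPt (hypercube n) S := Nat.one_le_iff_ne_zero.2 hpt0
      have h2 := SkewHyp.zfs_lower hn S hS
      omega
end

section
/- For every connected simple graph G with at least two vertices, the corona G ∘ K_1 satisfies th_-(G ∘ K_1) = 2. -/
open SimpleGraph

/-! From the empty set, every vertex of `G` is forced in the first round by its own leaf and
every leaf in the second, so `th₋(G ∘ K₁) ≤ 0 + 2`. Conversely `th₋ ≤ 1` would need either an
initial set of at most one vertex that is already everything, or an empty set finishing in one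
round; the latter fails because a leaf is forced only by its stem, which has a second white neighbor in `G`
as soon as `G` has no isolated vertex. -/

section SkewForcing

variable {V : Type*} (G : SimpleGraph V)

lemma mem_skewIter_empty_one_iff (w : V) :
    w ∈ skewIter G ∅ 1 ↔ ∃ v, G.Adj v w ∧ ∀ u, G.Adj v u → u = w := by
  simp [skewIter, skewStep]

lemma skewIter_skewPt {S : Set V} (hS : IsSkewZFS G S) : skewIter G S (skewPt G S) = Set.univ :=
  Nat.sInf_mem hS

lemma skewTh_le {S : Set V} {n : ℕ} (h : skewIter G S n = Set.univ) :
    skewTh G ≤ S.ncard + n :=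
  calc skewTh G ≤ S.ncard + skewPt G S := Nat.sInf_le ⟨S, ⟨n, h⟩, rfl⟩
    _ ≤ S.ncard + n := Nat.add_le_add_left (Nat.sInf_le h) _

lemma two_le_skewTh [Finite V] (hV : 2 ≤ Nat.card V) (h : skewIter G ∅ 1 ≠ Set.univ) :
    2 ≤ skewTh G := by
  refine le_csInf ⟨_, Set.univ, ⟨0, rfl⟩, rfl⟩ ?_
  rintro _ ⟨S, hS, rfl⟩
  have hfinal := skewIter_skewPt G hS
  by_contra! hlt
  obtain hpt | hpt : skewPt G S = 0 ∨ skewPt G S = 1 := by omega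
  · have hSuniv : S = Set.univ := by simpa [hpt, skewIter] using hfinal
    rw [hSuniv, Set.ncard_univ] at hlt
    omega
  · have hSempty : S = ∅ := by rw [← Set.ncard_eq_zero]; omega
    exact h (by rwa [hpt, hSempty] at hfinal)

end SkewForcing

section Corona

variable {α : Type*} (G : SimpleGraph α)

@[simp]
lemma coronaK1_adj_inl_inl {a b : α} : (coronaK1 G).Adj (Sum.inl a) (Sum.inl b) ↔ G.Adj a b := by
  simpa [coronaK1, G.adj_comm b a] using G.ne_of_adj

@[simp]
lemma coronaK1_adj_inl_inr {a b : α} : (coronaK1 G).Adj (Sum.inl a) (Sum.inr b) ↔ a = b := by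
  simp [coronaK1]

@[simp]
lemma coronaK1_adj_inr {a : α} {y : α ⊕ α} : (coronaK1 G).Adj (Sum.inr a) y ↔ y = Sum.inl a := by
  rcases y with b | b <;> simp [coronaK1, eq_comm]

lemma coronaK1_inl_mem_skewIter_empty_one (a : α) : Sum.inl a ∈ skewIter (coronaK1 G) ∅ 1 :=
  (mem_skewIter_empty_one_iff _ _).mpr ⟨Sum.inr a, by simp, by simp⟩

lemma coronaK1_inr_notMem_skewIter_empty_one {a b : α} (hab : G.Adj a b) :
    Sum.inr a ∉ skewIter (coronaK1 G) ∅ 1 := by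
  rw [mem_skewIter_empty_one_iff]
  rintro ⟨_ | c, hstem, honly⟩
  · obtain rfl : _ = a := by simpa using hstem
    simpa using honly (Sum.inl b) (by simpa using hab)
  · simp at hstem

lemma coronaK1_skewIter_empty_two : skewIter (coronaK1 G) ∅ 2 = Set.univ := by
  refine Set.eq_univ_of_forall fun x => Or.inr ?_
  rcases x with a | a
  · exact ⟨Sum.inr a, by simp, by simp⟩
  · refine ⟨Sum.inl a, by simp, fun u hu hwhite => ?_⟩
    rcases u with b | b
    · exact absurd (coronaK1_inl_mem_skewIter_empty_one G b) hwhite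
    · simp_all

end Corona

/-- for a connected graph `G` with at least two vertices,
`th₋(G ∘ K₁) = 2`. -/
theorem skewTh_coronaK1 {V : Type*} [Fintype V] (G : SimpleGraph V)
    (hc : G.Connected) (h2 : 2 ≤ Fintype.card V) :
    skewTh (coronaK1 G) = 2 := by
  have : Nontrivial V := Fintype.one_lt_card_iff_nontrivial.mp h2
  obtain ⟨a⟩ := hc.nonempty
  obtain ⟨b, hab⟩ := hc.preconnected.exists_adj_of_nontrivial a
  refine le_antisymm ?_ (two_le_skewTh _ ?_ fun h => ?_)
  · simpa using skewTh_le _ (coronaK1_skewIter_empty_two G)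
  · rw [Nat.card_sum, Nat.card_eq_fintype_card]
    omega
  · exact coronaK1_inr_notMem_skewIter_empty_one G hab (h ▸ Set.mem_univ _)
end

section
/- For every simple graph G of order n, the corona G ∘ K_2 satisfies th_-(G ∘ K_2) ≤ n + 1. -/
open SimpleGraph

theorem skewTh_le_of_skewIter_eq_univ {V : Type*} {G : SimpleGraph V} {S : Set V} {n : ℕ}
    (h : skewIter G S n = Set.univ) : skewTh G ≤ S.ncard + n :=
  calc skewTh G ≤ S.ncard + skewPt G S := Nat.sInf_le ⟨S, ⟨n, h⟩, rfl⟩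
    _ ≤ S.ncard + n := Nat.add_le_add_left (Nat.sInf_le h) _

theorem coronaK2_adj_inr_inr {V : Type*} {G : SimpleGraph V} {p q : V × Fin 2} :
    (coronaK2 G).Adj (Sum.inr p) (Sum.inr q) ↔ p.1 = q.1 ∧ p ≠ q := by
  simp only [coronaK2, fromRel_adj, ne_eq, Sum.inr.injEq, eq_comm (a := q.1), or_self]
  tauto

theorem coronaK2_adj_inr_inr_iff_eq {V : Type*} {G : SimpleGraph V} {p q : V × Fin 2} :
    (coronaK2 G).Adj (Sum.inr p) (Sum.inr q) ↔ q = (p.1, p.2 + 1) := by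
  obtain ⟨a, i⟩ := p
  obtain ⟨b, j⟩ := q
  rw [coronaK2_adj_inr_inr, Prod.mk.injEq, ne_eq, Prod.mk.injEq, eq_comm (a := a)]
  have : j ≠ i ↔ j = i + 1 := by fin_cases i <;> fin_cases j <;> decide
  tauto

/-- Once the base graph is blue, each vertex of a triangle has the other one as its only
white neighbor, so the whole corona is blue after one round. -/
theorem skewIter_coronaK2_range_inl_one {V : Type*} (G : SimpleGraph V) :
    skewIter (coronaK2 G) (Set.range Sum.inl) 1 = Set.univ := by
  refine Set.eq_univ_of_forall fun x => ?_
  rcases x with a | p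
  · exact Or.inl ⟨a, rfl⟩
  · refine Or.inr ⟨Sum.inr (p.1, p.2 + 1), (coronaK2_adj_inr_inr_iff_eq.2 rfl).symm, ?_⟩
    rintro (b | q) hadj hwhite
    · exact absurd ⟨b, rfl⟩ hwhite
    · rw [coronaK2_adj_inr_inr_iff_eq] at hadj
      have : p.2 + 1 + 1 = p.2 := by generalize p.2 = i; fin_cases i <;> decide
      simp [hadj, this]

theorem ncard_range_inl (α β : Type*) [Fintype α] :
    (Set.range (Sum.inl : α → α ⊕ β)).ncard = Fintype.card α := by
  rw [← Set.image_univ, Set.ncard_image_of_injective _ Sum.inl_injective, Set.ncard_univ,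
    Nat.card_eq_fintype_card]

/-- `th₋(G ∘ K₂) ≤ n + 1` for every graph `G` of order `n`. -/
theorem skewTh_coronaK2_le {V : Type*} [Fintype V] (G : SimpleGraph V) :
    skewTh (coronaK2 G) ≤ Fintype.card V + 1 := by
  simpa only [ncard_range_inl] using
    skewTh_le_of_skewIter_eq_univ (skewIter_coronaK2_range_inl_one G)
end

section
/- There exist constants c_1, c_2 > 0 such that for all n ≥ 3, the graph C_n ∘ K_2 satisfies c_1·√n ≤ th_-(C_n ∘ K_2) ≤ c_2·√n. -/
open SimpleGraph

open scoped Fin.CommRing Fin.NatCast Fin.IntCast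

section SkewAux

open Sum

variable {V : Type*} {G : SimpleGraph V}

lemma subset_skewStep (B : Set V) : B ⊆ skewStep G B := Set.subset_union_left

lemma skewIter_mono {S : Set V} {t t' : ℕ} (h : t ≤ t') :
    skewIter G S t ⊆ skewIter G S t' := by
  induction t' with
  | zero => simp_all
  | succ k ih =>
    rcases Nat.lt_or_ge t (k+1) with h' | h'
    · exact (ih (by omega)).trans (subset_skewStep _)
    · have : t = k + 1 := by omega
      subst this; rfl

lemma mem_skewStep_of_force {B : Set V} {v w : V} (hadj : G.Adj v w)
    (h : ∀ u, G.Adj v u → u = w ∨ u ∈ B) : w ∈ skewStep G B :=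
  Or.inr ⟨v, hadj, fun u hu hnB => ((h u hu).resolve_right hnB)⟩

variable {m : ℕ}

/-- base vertex map -/
def bmap : (Fin (m+3)) ⊕ (Fin (m+3) × Fin 2) → Fin (m+3)
  | Sum.inl a => a
  | Sum.inr p => p.1

lemma cyc_adj {a b : Fin (m+3)} :
    (SimpleGraph.cycleGraph (m+3)).Adj a b ↔ b = a - 1 ∨ b = a + 1 := by
  rw [SimpleGraph.cycleGraph_adj (n := m+1)]
  constructor
  · rintro (h | h)
    · left; linear_combination -h
    · right; linear_combination h
  · rintro (h | h)
    · left; linear_combination -h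
    · right; linear_combination h

/-- the corona graph we study -/
abbrev GG (m : ℕ) : SimpleGraph ((Fin (m+3)) ⊕ (Fin (m+3) × Fin 2)) :=
  coronaK2 (SimpleGraph.cycleGraph (m+3))

lemma adj_inl_inr {a : Fin (m+3)} {p : Fin (m+3) × Fin 2} :
    (GG m).Adj (inl a) (inr p) ↔ a = p.1 := by
  simp [coronaK2, SimpleGraph.fromRel_adj]

lemma adj_inr_inr {p q : Fin (m+3) × Fin 2} :
    (GG m).Adj (inr p) (inr q) ↔ p ≠ q ∧ p.1 = q.1 := by
  simp only [coronaK2, SimpleGraph.fromRel_adj, ne_eq, Sum.inr.injEq]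
  constructor
  · rintro ⟨h1, h2 | h2⟩ <;> exact ⟨h1, by omega⟩
  · rintro ⟨h1, h2⟩; exact ⟨h1, Or.inl h2⟩

lemma adj_inl_inl {a b : Fin (m+3)} :
    (GG m).Adj (inl a) (inl b) ↔ (SimpleGraph.cycleGraph (m+3)).Adj a b := by
  simp only [coronaK2, SimpleGraph.fromRel_adj, ne_eq, Sum.inl.injEq]
  constructor
  · rintro ⟨h1, h2 | h2⟩
    · exact h2
    · exact h2.symm
  · intro h; exact ⟨h.ne, Or.inl h⟩

lemma nbhd_inl {a : Fin (m+3)} {u : (Fin (m+3)) ⊕ (Fin (m+3) × Fin 2)}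
    (h : (GG m).Adj (inl a) u) :
    u = inl (a - 1) ∨ u = inl (a + 1) ∨ u = inr (a, 0) ∨ u = inr (a, 1) := by
  match u with
  | inl b =>
    rw [adj_inl_inl, cyc_adj] at h
    rcases h with h | h
    · exact Or.inl (by rw [h])
    · exact Or.inr (Or.inl (by rw [h]))
  | inr p =>
    rw [adj_inl_inr] at h
    subst h
    rcases p with ⟨b, i⟩
    fin_cases i
    · exact Or.inr (Or.inr (Or.inl rfl))
    · exact Or.inr (Or.inr (Or.inr rfl))

lemma nbhd_inr {p : Fin (m+3) × Fin 2} {u : (Fin (m+3)) ⊕ (Fin (m+3) × Fin 2)}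
    (h : (GG m).Adj (inr p) u) :
    u = inl p.1 ∨ u = inr (p.1, 1 - p.2) := by
  match u with
  | inl b =>
    rw [(GG m).adj_comm, adj_inl_inr] at h
    exact Or.inl (by rw [h])
  | inr q =>
    rw [adj_inr_inr] at h
    right
    obtain ⟨hne, hb⟩ := h
    rcases p with ⟨a, i⟩
    rcases q with ⟨b, j⟩
    simp only at hb
    subst hb
    congr 1
    simp only [Prod.mk.injEq, not_and, true_and] at hne ⊢
    fin_cases i <;> fin_cases j <;> simp_all

lemma fin2_sub_sub (i : Fin 2) : 1 - (1 - i) = i := by fin_cases i <;> decide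

lemma pend_adj {a : Fin (m+3)} {i : Fin 2} : (GG m).Adj (inr (a, 1 - i)) (inr (a, i)) := by
  rw [adj_inr_inr]
  refine ⟨?_, rfl⟩
  simp only [ne_eq, Prod.mk.injEq, true_and]
  fin_cases i <;> decide

/-- If the base vertex is blue, each pendant vertex gets forced in one step. -/
lemma pendant_force {B : Set ((Fin (m+3)) ⊕ (Fin (m+3) × Fin 2))} {a : Fin (m+3)}
    (ha : inl a ∈ B) (i : Fin 2) : inr (a, i) ∈ skewStep (GG m) B := by
  apply mem_skewStep_of_force (v := inr (a, 1 - i)) pend_adj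
  intro u hu
  rcases nbhd_inr hu with h | h
  · exact Or.inr (h ▸ ha)
  · left
    simp only [fin2_sub_sub] at h
    exact h

/-- Forcing along the cycle: if `a` and its pendants and `a+1` are blue, `a-1` gets forced. -/
lemma cycle_force_left {B : Set ((Fin (m+3)) ⊕ (Fin (m+3) × Fin 2))} {a : Fin (m+3)}
    (ha : inl (a+1) ∈ B) (hp0 : inr (a, 0) ∈ B) (hp1 : inr (a, 1) ∈ B) :
    inl (a - 1) ∈ skewStep (GG m) B := by
  apply mem_skewStep_of_force (v := inl a) (by rw [adj_inl_inl, cyc_adj]; exact Or.inl rfl)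
  intro u hu
  rcases nbhd_inl hu with h | h | h | h
  · exact Or.inl h
  all_goals exact Or.inr (by rw [h]; assumption)

lemma cycle_force_right {B : Set ((Fin (m+3)) ⊕ (Fin (m+3) × Fin 2))} {a : Fin (m+3)}
    (ha : inl (a-1) ∈ B) (hp0 : inr (a, 0) ∈ B) (hp1 : inr (a, 1) ∈ B) :
    inl (a + 1) ∈ skewStep (GG m) B := by
  apply mem_skewStep_of_force (v := inl a) (by rw [adj_inl_inl, cyc_adj]; exact Or.inr rfl)
  intro u hu
  rcases nbhd_inl hu with h | h | h | h
  · exact Or.inr (h ▸ ha)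
  · exact Or.inl h
  all_goals exact Or.inr (by rw [h]; assumption)

end SkewAux
section SkewSpread

open Sum

variable {m : ℕ} {S : Set ((Fin (m+3)) ⊕ (Fin (m+3) × Fin 2))}

lemma spread {a : Fin (m+3)} (ha : inl a ∈ S) (ha1 : inl (a+1) ∈ S) :
    ∀ r : ℕ, ∀ s : ℕ, s ≤ r →
      inl (a - (s : Fin (m+3))) ∈ skewIter (GG m) S (2*r) ∧
      inl (a + 1 + (s : Fin (m+3))) ∈ skewIter (GG m) S (2*r) := by
  intro r
  induction r with
  | zero =>
    intro s hs
    interval_cases s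
    simpa using ⟨ha, ha1⟩
  | succ r ih =>
    intro s hs
    rcases Nat.lt_or_ge s (r+1) with h' | h'
    · have := ih s (by omega)
      exact ⟨skewIter_mono (by omega) this.1, skewIter_mono (by omega) this.2⟩
    have hs' : s = r + 1 := by omega
    subst hs'
    have h2 : 2*(r+1) = (2*r + 1) + 1 := by ring
    have hIr := ih r le_rfl
    have hv : inl (a - (r : Fin (m+3))) ∈ skewIter (GG m) S (2*r + 1) :=
      skewIter_mono (by omega) hIr.1
    have hv' : inl (a + 1 + (r : Fin (m+3))) ∈ skewIter (GG m) S (2*r + 1) :=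
      skewIter_mono (by omega) hIr.2
    have hp : ∀ i : Fin 2, inr (a - (r : Fin (m+3)), i) ∈ skewIter (GG m) S (2*r + 1) :=
      fun i => pendant_force hIr.1 i
    have hp' : ∀ i : Fin 2, inr (a + 1 + (r : Fin (m+3)), i) ∈ skewIter (GG m) S (2*r + 1) :=
      fun i => pendant_force hIr.2 i
    have hnext : inl ((a - (r : Fin (m+3))) + 1) ∈ skewIter (GG m) S (2*r + 1) := by
      rcases Nat.eq_zero_or_pos r with hr | hr
      · subst hr
        simpa using skewIter_mono (Nat.zero_le _) ha1
      · have hc : ((r - 1 : ℕ) : Fin (m+3)) = (r : Fin (m+3)) - 1 := by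
          push_cast [Nat.cast_sub hr]; ring
        have := (ih (r-1) (by omega)).1
        rw [hc] at this
        have h3 : a - ((r : Fin (m+3)) - 1) = (a - (r : Fin (m+3))) + 1 := by ring
        rw [h3] at this
        exact skewIter_mono (by omega) this
    have hprev : inl ((a + 1 + (r : Fin (m+3))) - 1) ∈ skewIter (GG m) S (2*r + 1) := by
      rcases Nat.eq_zero_or_pos r with hr | hr
      · subst hr
        simpa using skewIter_mono (Nat.zero_le _) ha
      · have hc : ((r - 1 : ℕ) : Fin (m+3)) = (r : Fin (m+3)) - 1 := by
          push_cast [Nat.cast_sub hr]; ring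
        have := (ih (r-1) (by omega)).2
        rw [hc] at this
        have h3 : a + 1 + ((r : Fin (m+3)) - 1) = (a + 1 + (r : Fin (m+3))) - 1 := by ring
        rw [h3] at this
        exact skewIter_mono (by omega) this
    constructor
    · have hcast : a - ((r+1 : ℕ) : Fin (m+3)) = (a - (r : Fin (m+3))) - 1 := by
        push_cast; ring
      rw [hcast, h2]
      exact cycle_force_left hnext (hp 0) (hp 1)
    · have hcast : a + 1 + ((r+1 : ℕ) : Fin (m+3)) = (a + 1 + (r : Fin (m+3))) + 1 := by
        push_cast; ring
      rw [hcast, h2]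
      exact cycle_force_right hprev (hp' 0) (hp' 1)

end SkewSpread
section SkewUpper

open Sum

variable {m : ℕ}

lemma exists_zfs (m : ℕ) : IsSkewZFS (GG m) Set.univ := ⟨0, rfl⟩

lemma upper (m : ℕ) : skewTh (GG m) ≤ 4 * Nat.sqrt (m+3) + 3 := by
  classical
  set L := Nat.sqrt (m+3) with hLdef
  have hL : 1 ≤ L := Nat.le_sqrt.mpr (by omega)
  have hub : m + 3 < (L+1) * (L+1) := by
    have := Nat.lt_succ_sqrt (m+3)
    simpa [hLdef, Nat.succ_eq_add_one] using this
  set SS : Set ((Fin (m+3)) ⊕ (Fin (m+3) × Fin 2)) :=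
    {x | ∃ a : Fin (m+3), a.val % L < 2 ∧ x = inl a} with hSSdef
  -- coverage of all base vertices by time 2*(L-1)
  have cover : ∀ j : Fin (m+3), inl j ∈ skewIter (GG m) SS (2*(L-1)) := by
    intro j
    obtain ⟨q, s, hqs, hsL⟩ : ∃ q s, L * q + s = j.val ∧ s < L :=
      ⟨j.val / L, j.val % L, Nat.div_add_mod _ _, Nat.mod_lt _ (by omega)⟩
    have hjlt : j.val < m + 3 := j.isLt
    set a : Fin (m+3) := ((L*q : ℕ) : Fin (m+3)) with hadef
    have haval : a.val = L * q := by
      rw [hadef, Fin.val_natCast, Nat.mod_eq_of_lt (by omega)]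
    have ha : inl a ∈ SS := ⟨a, by rw [haval]; simp [Nat.mul_mod_right], rfl⟩
    have ha1 : inl (a+1) ∈ SS := by
      refine ⟨a+1, ?_, rfl⟩
      have hv1 : (1 : Fin (m+3)).val = 1 := rfl
      have : (a+1).val = (L*q + 1) % (m+3) := by
        rw [Fin.add_def, haval, hv1]
      rcases Nat.lt_or_ge (L*q+1) (m+3) with h | h
      · rw [this, Nat.mod_eq_of_lt h]
        have h1 : (L*q+1) % L ≤ 1 := by
          rw [Nat.add_comm, Nat.add_mul_mod_self_left]
          exact Nat.mod_le 1 L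
        omega
      · have he : L*q + 1 = m+3 := by omega
        rw [this, he, Nat.mod_self, Nat.zero_mod]
        omega
    rcases Nat.eq_zero_or_pos s with hs0 | hs0
    · have hj : j = a := by
        apply Fin.ext
        rw [haval]; omega
      rw [hj]
      exact skewIter_mono (Nat.zero_le _) ha
    · obtain ⟨s', rfl⟩ : ∃ s', s = s' + 1 := ⟨s - 1, by omega⟩
      have hj : j = a + 1 + (s' : Fin (m+3)) := by
        have : j = ((j.val : ℕ) : Fin (m+3)) := (Fin.cast_val_eq_self j).symm
        rw [this, ← hqs, hadef]
        push_cast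
        ring
      rw [hj]
      exact (spread ha ha1 (L-1) s' (by omega)).2
  have hall : skewIter (GG m) SS (2*(L-1)+1) = Set.univ := by
    rw [Set.eq_univ_iff_forall]
    intro x
    match x with
    | inl j => exact skewIter_mono (by omega) (cover j)
    | inr (b, i) => exact pendant_force (cover b) i
  have hzfs : IsSkewZFS (GG m) SS := ⟨_, hall⟩
  have hpt : skewPt (GG m) SS ≤ 2*(L-1)+1 := Nat.sInf_le hall
  -- cardinality bound
  have hcard : SS.ncard ≤ 2*(L+2) := by
    have hSS : SS = Sum.inl '' {a : Fin (m+3) | a.val % L < 2} := by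
      ext x
      constructor
      · rintro ⟨a, h1, rfl⟩; exact ⟨a, h1, rfl⟩
      · rintro ⟨a, h1, rfl⟩; exact ⟨a, h1, rfl⟩
    rw [hSS, Set.ncard_image_of_injective _ Sum.inl_injective]
    set A : Set (Fin (m+3)) := {a : Fin (m+3) | a.val % L < 2} with hA
    rw [Set.ncard_eq_toFinset_card' A]
    have : A.toFinset.card ≤ ((Finset.range (L+2)) ×ˢ (Finset.range 2)).card := by
      apply Finset.card_le_card_of_injOn (fun a => (a.val / L, a.val % L))
      · intro a haA
        rw [Finset.mem_coe, Finset.mem_product, Finset.mem_range, Finset.mem_range]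
        have haA' : a.val % L < 2 := by simpa [hA] using haA
        constructor
        · rw [Nat.div_lt_iff_lt_mul (by omega)]
          have : a.val < m + 3 := a.isLt
          nlinarith
        · exact haA'
      · intro a _ b _ hab
        simp only [Prod.mk.injEq] at hab
        apply Fin.ext
        have h1 := Nat.div_add_mod a.val L
        have h2 := Nat.div_add_mod b.val L
        rw [hab.1, hab.2] at h1
        omega
    rw [Finset.card_product, Finset.card_range, Finset.card_range] at this
    omega
  calc skewTh (GG m) ≤ SS.ncard + skewPt (GG m) SS := Nat.sInf_le ⟨SS, hzfs, rfl⟩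
    _ ≤ 2*(L+2) + (2*(L-1)+1) := by omega
    _ ≤ 4 * L + 3 := by omega

end SkewUpper
section SkewLower

open Sum

variable {m : ℕ}

/-- adjacency moves the base vertex by at most one around the cycle -/
lemma adj_base {x y : (Fin (m+3)) ⊕ (Fin (m+3) × Fin 2)} (h : (GG m).Adj x y) :
    ∃ p q : ℕ, p ≤ 1 ∧ q ≤ 1 ∧ bmap x + (p : Fin (m+3)) = bmap y + (q : Fin (m+3)) := by
  match x, y with
  | inl a, inl b =>
    rw [adj_inl_inl, cyc_adj] at h
    rcases h with h | h
    · exact ⟨0, 1, by omega, le_rfl, by rw [h]; show a + 0 = (a - 1) + 1; ring⟩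
    · exact ⟨1, 0, le_rfl, by omega, by rw [h]; show a + 1 = (a + 1) + 0; ring⟩
  | inl a, inr p =>
    rw [adj_inl_inr] at h
    exact ⟨0, 0, by omega, by omega, by rw [h]; rfl⟩
  | inr p, inl a =>
    rw [(GG m).adj_comm, adj_inl_inr] at h
    exact ⟨0, 0, by omega, by omega, by rw [h]; rfl⟩
  | inr p, inr q =>
    rw [adj_inr_inr] at h
    exact ⟨0, 0, by omega, by omega, by rw [show bmap (inr p) = p.1 from rfl,
      show bmap (inr q) = q.1 from rfl, h.2]⟩

/-- every vertex has a neighbor different from any given vertex -/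
lemma second_nbr (v w : (Fin (m+3)) ⊕ (Fin (m+3) × Fin 2)) :
    ∃ u, (GG m).Adj v u ∧ u ≠ w := by
  match v with
  | inl a =>
    by_cases hw : w = inr (a, 0)
    · exact ⟨inr (a, 1), adj_inl_inr.mpr rfl, by rw [hw]; simp⟩
    · exact ⟨inr (a, 0), adj_inl_inr.mpr rfl, fun h => hw h.symm⟩
  | inr p =>
    by_cases hw : w = inl p.1
    · exact ⟨inr (p.1, 1 - p.2), (pend_adj (a := p.1) (i := p.2)).symm, by rw [hw]; simp⟩
    · exact ⟨inl p.1, (adj_inl_inr.mpr rfl).symm, fun h => hw h.symm⟩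

lemma invariant (S : Set ((Fin (m+3)) ⊕ (Fin (m+3) × Fin 2))) :
    ∀ t, ∀ w ∈ skewIter (GG m) S t, ∃ s ∈ S, ∃ p q : ℕ, p ≤ 2*t ∧ q ≤ 2*t ∧
      bmap w + (p : Fin (m+3)) = bmap s + (q : Fin (m+3)) := by
  intro t
  induction t with
  | zero => exact fun w hw => ⟨w, hw, 0, 0, by omega, by omega, rfl⟩
  | succ t ih =>
    intro w hw
    rcases hw with hw | ⟨v, hadj, hforce⟩
    · obtain ⟨s, hs, p, q, hp, hq, heq⟩ := ih w hw
      exact ⟨s, hs, p, q, by omega, by omega, heq⟩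
    · obtain ⟨u, huadj, hune⟩ := second_nbr v w
      have huB : u ∈ skewIter (GG m) S t := by
        by_contra hc
        exact hune (hforce u huadj hc)
      obtain ⟨s, hs, p, q, hp, hq, heq⟩ := ih u huB
      obtain ⟨p1, q1, hp1, hq1, heq1⟩ := adj_base huadj
      obtain ⟨p2, q2, hp2, hq2, heq2⟩ := adj_base hadj
      refine ⟨s, hs, q2 + p1 + p, q + q1 + p2, by omega, by omega, ?_⟩
      push_cast
      linear_combination heq + heq1 - heq2

lemma count (S : Set ((Fin (m+3)) ⊕ (Fin (m+3) × Fin 2))) (t : ℕ)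
    (h : skewIter (GG m) S t = Set.univ) : m + 3 ≤ S.ncard * (4*t+1) := by
  classical
  have hfin : S.Finite := Set.toFinite S
  set Sf := hfin.toFinset with hSf
  set F : ((Fin (m+3)) ⊕ (Fin (m+3) × Fin 2)) × ℕ → Fin (m+3) :=
    fun x => bmap x.1 + (x.2 : Fin (m+3)) - ((2*t : ℕ) : Fin (m+3)) with hF
  have hsub : Finset.univ ⊆ Finset.image F (Sf ×ˢ Finset.range (4*t+1)) := by
    intro b _
    obtain ⟨s, hs, p, q, hp, hq, heq⟩ := invariant S t (inl b) (h ▸ Set.mem_univ _)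
    rw [Finset.mem_image]
    refine ⟨(s, q + (2*t - p)), ?_, ?_⟩
    · rw [Finset.mem_product]
      exact ⟨hfin.mem_toFinset.mpr hs, Finset.mem_range.mpr (by omega)⟩
    · show bmap s + ((q + (2*t - p) : ℕ) : Fin (m+3)) - ((2*t : ℕ) : Fin (m+3)) = b
      rw [Nat.cast_add, Nat.cast_sub hp]
      have hb : bmap (inl b) = b := rfl
      rw [hb] at heq
      push_cast
      linear_combination -heq
  have hcardle := Finset.card_le_card hsub
  rw [Finset.card_univ, Fintype.card_fin] at hcardle
  have h2 := Finset.card_image_le (f := F) (s := Sf ×ˢ Finset.range (4*t+1))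
  rw [Finset.card_product, Finset.card_range] at h2
  have h3 : Sf.card = S.ncard := (Set.ncard_eq_toFinset_card S hfin).symm
  rw [h3] at h2
  omega

lemma lower (m : ℕ) : m + 3 ≤ 5 * (skewTh (GG m))^2 := by
  have hne : {k | ∃ S, IsSkewZFS (GG m) S ∧ k = S.ncard + skewPt (GG m) S}.Nonempty :=
    ⟨_, Set.univ, exists_zfs m, rfl⟩
  obtain ⟨S, hzfs, hth⟩ := Nat.sInf_mem hne
  obtain ⟨t0, ht0⟩ := hzfs
  have hptmem : skewIter (GG m) S (skewPt (GG m) S) = Set.univ :=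
    Nat.sInf_mem (⟨t0, ht0⟩ : {k | skewIter (GG m) S k = Set.univ}.Nonempty)
  have hcount := count S (skewPt (GG m) S) hptmem
  set k := S.ncard
  set t := skewPt (GG m) S
  have hth' : skewTh (GG m) = k + t := hth
  rw [hth']
  have hk : k ≤ k^2 := Nat.le_self_pow (by norm_num) k
  nlinarith [hcount, hk, Nat.zero_le (k*t), Nat.zero_le (t*t)]

end SkewLower
/-- `th₋(Cₙ ∘ K₂) = Θ(√n)`. -/
theorem skewTh_coronaK2_cycle_theta :
    ∃ c₁ c₂ : ℝ, 0 < c₁ ∧ 0 < c₂ ∧ ∀ n : ℕ, 3 ≤ n →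
      c₁ * Real.sqrt n ≤ (skewTh (coronaK2 (SimpleGraph.cycleGraph n)) : ℝ) ∧
      (skewTh (coronaK2 (SimpleGraph.cycleGraph n)) : ℝ) ≤ c₂ * Real.sqrt n := by
  refine ⟨(Real.sqrt 5)⁻¹, 7, by positivity, by norm_num, ?_⟩
  intro n hn
  obtain ⟨m, rfl⟩ : ∃ m, n = m + 3 := ⟨n - 3, by omega⟩
  set T : ℕ := skewTh (coronaK2 (SimpleGraph.cycleGraph (m+3))) with hT
  have hT0 : (0:ℝ) ≤ (T:ℝ) := Nat.cast_nonneg _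
  have hs5 : (0:ℝ) < Real.sqrt 5 := Real.sqrt_pos.mpr (by norm_num)
  have hx0 : (0:ℝ) ≤ ((m+3 : ℕ) : ℝ) := Nat.cast_nonneg _
  constructor
  · -- lower bound
    have hl : ((m+3 : ℕ) : ℝ) ≤ 5 * (T:ℝ)^2 := by exact_mod_cast lower m
    have h2 : Real.sqrt ((m+3 : ℕ) : ℝ) ≤ Real.sqrt (5 * (T:ℝ)^2) := Real.sqrt_le_sqrt hl
    have h3 : Real.sqrt (5 * (T:ℝ)^2) = Real.sqrt 5 * (T:ℝ) := by
      rw [show (5:ℝ) * (T:ℝ)^2 = (Real.sqrt 5 * (T:ℝ))^2 by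
        rw [mul_pow, Real.sq_sqrt (by norm_num : (5:ℝ) ≥ 0)]]
      exact Real.sqrt_sq (by positivity)
    rw [h3] at h2
    calc (Real.sqrt 5)⁻¹ * Real.sqrt ((m+3 : ℕ) : ℝ)
        ≤ (Real.sqrt 5)⁻¹ * (Real.sqrt 5 * (T:ℝ)) := by
          apply mul_le_mul_of_nonneg_left h2 (by positivity)
      _ = (T:ℝ) := by field_simp
  · -- upper bound
    have hu : (T:ℝ) ≤ 4 * (Nat.sqrt (m+3) : ℝ) + 3 := by exact_mod_cast upper m
    have h2 : ((Nat.sqrt (m+3) : ℝ)) ≤ Real.sqrt ((m+3 : ℕ) : ℝ) :=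
      Real.nat_sqrt_le_real_sqrt
    have h3 : (1:ℝ) ≤ Real.sqrt ((m+3 : ℕ) : ℝ) := by
      rw [show (1:ℝ) = Real.sqrt 1 by simp]
      apply Real.sqrt_le_sqrt
      have : (0:ℝ) ≤ (m:ℝ) := Nat.cast_nonneg m
      push_cast
      linarith
    linarith
end
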